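/- arXiv:1208.6510 — 6 statements merged into one kernel-verified Lean document; each statement's English description precedes it below -/
import Mathlib

section
/- Let X be a topological space, E and F be normed (or locally convex) vector spaces over ℝ, k ≥ 1 a natural number, and f : X × E^k → F a map such that for each x ∈ X the map f(x, ·) : E^k → F is symmetric and k-multilinear. Then f is continuous if and only if the map g : X × E → F defined by g(x, w) := f(x, w, w, …, w) is continuous. -/
open Finset

lemma mySignSum {k : ℕ} (T : Finset (Fin k)) :
    ∑ S ∈ univ.filter (fun S : Finset (Fin k) => T ⊆ S), (-1 : ℝ) ^ (k - S.card) =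
      if T = univ then 1 else 0 := by
  have hpow : ∀ s : ℕ, s ≤ k → (-1 : ℝ) ^ (k - s) = (-1) ^ k * (-1) ^ s := by
    intro s hs
    have h1 : (-1 : ℝ) ^ (k - s) = (-1) ^ (k - s) * ((-1 : ℝ) ^ 2) ^ s := by norm_num
    rw [h1, ← pow_mul, ← pow_add]
    have : k - s + 2 * s = k + s := by omega
    rw [this, pow_add]
  have hbij : ∑ S ∈ univ.filter (fun S : Finset (Fin k) => T ⊆ S), (-1 : ℝ) ^ S.card =
      ∑ U ∈ Tᶜ.powerset, (-1 : ℝ) ^ (T ∪ U).card := by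
    refine Finset.sum_bij' (fun S _ => S \ T) (fun U _ => T ∪ U) ?_ ?_ ?_ ?_ ?_
    · intro S hS
      simp only [mem_filter, mem_univ, true_and] at hS
      simp only [mem_powerset]
      intro x hx
      simp only [mem_sdiff] at hx
      simp [hx.2]
    · intro U hU
      simp
    · intro S hS
      simp only [mem_filter, mem_univ, true_and] at hS
      exact Finset.union_sdiff_of_subset hS
    · intro U hU
      simp only [mem_powerset] at hU
      apply Finset.union_sdiff_cancel_left
      rw [Finset.disjoint_left]
      intro a haT haU
      have := hU haU
      simp at this
      exact this haT
    · intro S hS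
      simp only [mem_filter, mem_univ, true_and] at hS
      rw [Finset.union_sdiff_of_subset hS]
  have hcard : ∀ U ∈ Tᶜ.powerset, (T ∪ U).card = T.card + U.card := by
    intro U hU
    simp only [mem_powerset] at hU
    rw [Finset.card_union_of_disjoint]
    rw [Finset.disjoint_left]
    intro a haT haU
    have := hU haU
    simp at this
    exact this haT
  calc ∑ S ∈ univ.filter (fun S : Finset (Fin k) => T ⊆ S), (-1 : ℝ) ^ (k - S.card)
      = ∑ S ∈ univ.filter (fun S : Finset (Fin k) => T ⊆ S), (-1:ℝ) ^ k * (-1) ^ S.card := by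
        refine Finset.sum_congr rfl fun S _ => hpow _ (by simpa using Finset.card_le_univ S)
    _ = (-1:ℝ)^k * ∑ S ∈ univ.filter (fun S : Finset (Fin k) => T ⊆ S), (-1:ℝ) ^ S.card := by
        rw [Finset.mul_sum]
    _ = (-1:ℝ)^k * ∑ U ∈ Tᶜ.powerset, (-1 : ℝ) ^ (T ∪ U).card := by rw [hbij]
    _ = (-1:ℝ)^k * ((-1)^T.card * ∑ U ∈ Tᶜ.powerset, (-1 : ℝ) ^ U.card) := by
        congr 1
        rw [Finset.mul_sum]
        refine Finset.sum_congr rfl fun U hU => ?_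
        rw [hcard U hU, pow_add]
    _ = if T = univ then 1 else 0 := by
        have := @Finset.sum_powerset_neg_one_pow_card (Fin k) _ Tᶜ
        have h2 : ∑ U ∈ Tᶜ.powerset, (-1 : ℝ) ^ U.card =
            if Tᶜ = ∅ then 1 else 0 := by
          have := congrArg (fun z : ℤ => (z : ℝ)) this
          push_cast at this
          convert this using 2 <;> simp
        rw [h2]
        by_cases hT : T = univ
        · subst hT
          simp [← pow_add, ← two_mul, pow_mul]
        · have : Tᶜ ≠ ∅ := by
            simp only [ne_eq, ← Finset.compl_eq_empty_iff]
            simpa using hT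
          simp [this, hT]

lemma myPolar {E F : Type*} [NormedAddCommGroup E] [NormedSpace ℝ E]
    [NormedAddCommGroup F] [NormedSpace ℝ F] {k : ℕ}
    (M : MultilinearMap ℝ (fun _ : Fin k => E) F)
    (hsymm : ∀ (σ : Equiv.Perm (Fin k)) (v : Fin k → E), M (v ∘ σ) = M v)
    (v : Fin k → E) :
    (k.factorial : ℝ) • M v =
      ∑ S : Finset (Fin k), ((-1 : ℝ) ^ (k - S.card)) • M (fun _ => ∑ i ∈ S, v i) := by
  classical
  have h1 : ∀ S : Finset (Fin k), M (fun _ => ∑ i ∈ S, v i) =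
      ∑ r : Fin k → Fin k, if (∀ j, r j ∈ S) then M (v ∘ r) else 0 := by
    intro S
    have hS : (fun _ : Fin k => ∑ i ∈ S, v i) =
        fun _ : Fin k => ∑ i : Fin k, if i ∈ S then v i else 0 := by
      funext j
      rw [Finset.sum_ite_mem, Finset.univ_inter]
    rw [hS, M.map_sum]
    refine Finset.sum_congr rfl fun r _ => ?_
    by_cases hr : ∀ j, r j ∈ S
    · rw [if_pos hr]
      congr 1
      funext j
      rw [if_pos (hr j)]
      rfl
    · rw [if_neg hr]
      push_neg at hr
      obtain ⟨j, hj⟩ := hr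
      exact M.map_coord_zero j (by simp [hj])
  symm
  calc ∑ S : Finset (Fin k), ((-1 : ℝ) ^ (k - S.card)) • M (fun _ => ∑ i ∈ S, v i)
      = ∑ S : Finset (Fin k), ∑ r : Fin k → Fin k,
          ((-1 : ℝ) ^ (k - S.card)) • (if (∀ j, r j ∈ S) then M (v ∘ r) else 0) := by
        refine Finset.sum_congr rfl fun S _ => ?_
        rw [h1 S, Finset.smul_sum]
    _ = ∑ r : Fin k → Fin k, ∑ S : Finset (Fin k),
          ((-1 : ℝ) ^ (k - S.card)) • (if (∀ j, r j ∈ S) then M (v ∘ r) else 0) :=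
        Finset.sum_comm
    _ = ∑ r : Fin k → Fin k,
          (if Function.Surjective r then M (v ∘ r) else 0) := by
        refine Finset.sum_congr rfl fun r _ => ?_
        have step : ∀ S : Finset (Fin k),
            ((-1 : ℝ) ^ (k - S.card)) • (if (∀ j, r j ∈ S) then M (v ∘ r) else 0) =
            if Finset.image r Finset.univ ⊆ S
              then ((-1 : ℝ) ^ (k - S.card)) • M (v ∘ r) else 0 := by
          intro S
          have : (∀ j, r j ∈ S) ↔ Finset.image r Finset.univ ⊆ S := by
            simp [Finset.image_subset_iff]
          by_cases h : ∀ j, r j ∈ S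
          · rw [if_pos h, if_pos (this.mp h)]
          · rw [if_neg h, if_neg (fun hs => h (this.mpr hs)), smul_zero]
        simp only [step]
        rw [← Finset.sum_filter, ← Finset.sum_smul, mySignSum]
        have himg : Finset.image r Finset.univ = Finset.univ ↔ Function.Surjective r := by
          constructor
          · intro h y
            have : y ∈ Finset.image r Finset.univ := by rw [h]; exact Finset.mem_univ y
            simpa using this
          · intro h
            ext y
            simpa using h y
        by_cases h : Function.Surjective r
        · rw [if_pos (himg.mpr h), if_pos h, one_smul]
        · rw [if_neg (fun he => h (himg.mp he)), if_neg h, zero_smul]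
    _ = ∑ r ∈ Finset.univ.filter (fun r : Fin k → Fin k => Function.Surjective r),
          M (v ∘ r) := by rw [Finset.sum_filter]
    _ = ∑ r ∈ Finset.univ.filter (fun r : Fin k → Fin k => Function.Surjective r),
          M v := by
        refine Finset.sum_congr rfl fun r hr => ?_
        simp only [Finset.mem_filter] at hr
        have hbij : Function.Bijective r := Finite.surjective_iff_bijective.mp hr.2
        exact hsymm (Equiv.ofBijective r hbij) v
    _ = (k.factorial : ℝ) • M v := by
        rw [Finset.sum_const]
        have hset : Finset.univ.filter (fun r : Fin k → Fin k => Function.Surjective r)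
            = Finset.univ.image (fun σ : Equiv.Perm (Fin k) => ⇑σ) := by
          ext r
          simp only [Finset.mem_filter, Finset.mem_univ, true_and, Finset.mem_image]
          constructor
          · intro h
            exact ⟨Equiv.ofBijective r (Finite.surjective_iff_bijective.mp h), rfl⟩
          · rintro ⟨σ, rfl⟩
            exact σ.surjective
        rw [hset, Finset.card_image_of_injective _ (fun a b h => Equiv.coe_fn_injective h),
          Finset.card_univ, Fintype.card_perm, Fintype.card_fin]
        rw [← Nat.cast_smul_eq_nsmul ℝ]

/-- Polarization: a map `f : X × Eᵏ → F` which is symmetric `k`-linear in the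
second variable (for each fixed `x`) is continuous iff
`g(x,w) := f(x,w,…,w)` is continuous. -/
theorem stmt0
    {X : Type*} [TopologicalSpace X]
    {E F : Type*} [NormedAddCommGroup E] [NormedSpace ℝ E]
    [NormedAddCommGroup F] [NormedSpace ℝ F]
    (k : ℕ) (hk : 1 ≤ k)
    (M : X → MultilinearMap ℝ (fun _ : Fin k => E) F)
    (hsymm : ∀ (x : X) (σ : Equiv.Perm (Fin k)) (v : Fin k → E),
      M x (v ∘ σ) = M x v) :
    Continuous (fun p : X × (Fin k → E) => M p.1 p.2) ↔
      Continuous (fun p : X × E => M p.1 (fun _ => p.2)) := by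
  constructor
  · intro h
    exact h.comp (continuous_fst.prodMk (continuous_pi fun _ => continuous_snd))
  · intro h
    have h0 : (k.factorial : ℝ) ≠ 0 := by exact_mod_cast Nat.factorial_ne_zero k
    have key : (fun p : X × (Fin k → E) => M p.1 p.2) =
        fun p => (k.factorial : ℝ)⁻¹ • ∑ S : Finset (Fin k),
          ((-1:ℝ) ^ (k - S.card)) • M p.1 (fun _ => ∑ i ∈ S, p.2 i) := by
      funext p
      rw [← myPolar (M p.1) (hsymm p.1) p.2, inv_smul_smul₀ h0]
    rw [key]
    apply Continuous.const_smul
    apply continuous_finset_sum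
    intro S _
    apply Continuous.const_smul
    exact h.comp (continuous_fst.prodMk
      (continuous_finset_sum S fun i _ => (continuous_apply i).comp continuous_snd))
end

section
/- Let X be a topological space, E₁, E₂ and F real vector spaces with topologies making them topological vector spaces, and k, l ≥ 1 natural numbers. Let f : X × E₁^k × E₂^l → F be a map such that f(x, ·, w₁,…,w_l) is symmetric k-linear for all fixed x and w's, and f(x, v₁,…,v_k, ·) is symmetric l-linear for all fixed x and v's. Then f is continuous if and only if the map g : X × E₁ × E₂ → F, g(x, v, w) := f(x, v,…,v, w,…,w) is continuous. -/
/-!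
Expanding `f (∑_{i ∉ T} vᵢ, …, ∑_{i ∉ T} vᵢ)` by multilinearity and summing with signs `(-1)^|T|`
over all `T`, inclusion–exclusion kills every term `f (v ∘ r)` with `r` not surjective, and by
symmetry the surviving terms add up to `n! • f v`. Hence `f (x, v)` is a fixed linear combination
of values of `x, u ↦ f (x, u, …, u)` at linear functions of `v`, so continuity of the restriction
to the diagonal gives continuity of `f`. Applying this first in the `E₂`-block and then in the
`E₁`-block proves the theorem.
-/

open Finset

theorem Fintype.sum_ite_bijective_eq_sum_perm {ι M : Type*} [Fintype ι] [DecidableEq ι]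
    [AddCommMonoid M] (g : (ι → ι) → M) :
    ∑ r : ι → ι, (if Function.Bijective r then g r else 0) = ∑ σ : Equiv.Perm ι, g σ := by
  rw [← sum_filter, sum_subtype (p := Function.Bijective) _ (fun r => by simp)]
  exact Fintype.sum_equiv Equiv.bijectiveEquiv _ _ fun _ => rfl

namespace MultilinearMap

def evalₗ {R ι N : Type*} {M : ι → Type*} [CommSemiring R]
    [∀ i, AddCommMonoid (M i)] [∀ i, Module R (M i)] [AddCommMonoid N] [Module R N]
    (m : ∀ i, M i) : MultilinearMap R M N →ₗ[R] N where
  toFun f := f m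
  map_add' _ _ := rfl
  map_smul' _ _ := rfl

variable {R ι E G : Type*} [CommSemiring R] [AddCommMonoid E] [Module R E]
  [AddCommGroup G] [Module R G] [Fintype ι] [DecidableEq ι]

theorem sum_neg_one_pow_smul_map_diag (f : MultilinearMap R (fun _ : ι => E) G)
    (hf : ∀ (σ : Equiv.Perm ι) (v : ι → E), f (v ∘ σ) = f v) (v : ι → E) :
    ∑ T : Finset ι, (-1 : ℤ) ^ #T • f (fun _ => ∑ i ∈ Tᶜ, v i) =
      (Fintype.card ι).factorial • f v := by
  have hexp (T : Finset ι) : f (fun _ => ∑ i ∈ Tᶜ, v i) =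
      ∑ r : ι → ι, if T ∈ (univ.image r)ᶜ.powerset then f (v ∘ r) else 0 := by
    rw [f.map_sum_finset (fun _ j => v j) (fun _ => Tᶜ), ← sum_filter]
    congr 1
    ext r
    simp only [mem_filter, mem_univ, true_and, Fintype.mem_piFinset, mem_compl, mem_powerset,
      subset_iff, mem_image]
    grind
  have hsign (r : ι → ι) :
      ∑ T : Finset ι, (if T ∈ (univ.image r)ᶜ.powerset then (-1 : ℤ) ^ #T else 0) =
        if Function.Bijective r then 1 else 0 := by
    simp only [sum_ite_mem, univ_inter, sum_powerset_neg_one_pow_card, compl_eq_empty_iff,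
      ← Finite.surjective_iff_bijective, eq_univ_iff_forall, mem_image, mem_univ, true_and,
      Function.Surjective]
  calc ∑ T : Finset ι, (-1 : ℤ) ^ #T • f (fun _ => ∑ i ∈ Tᶜ, v i)
      = ∑ r : ι → ι, (∑ T : Finset ι, if T ∈ (univ.image r)ᶜ.powerset then (-1 : ℤ) ^ #T else 0) •
          f (v ∘ r) := by
        simp only [hexp, smul_sum, sum_smul, ite_smul, zero_smul, smul_ite, smul_zero]
        exact sum_comm
    _ = ∑ σ : Equiv.Perm ι, f (v ∘ σ) := by
        simp only [hsign, ite_smul, one_smul, zero_smul]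
        exact Fintype.sum_ite_bijective_eq_sum_perm (fun r => f (v ∘ r))
    _ = (Fintype.card ι).factorial • f v := by
        simp [hf, Fintype.card_perm]

end MultilinearMap

theorem continuous_of_continuous_diag {Y 𝕜 ι E F : Type*} [TopologicalSpace Y] [Field 𝕜]
    [CharZero 𝕜] [Fintype ι] [AddCommMonoid E] [Module 𝕜 E] [TopologicalSpace E]
    [ContinuousAdd E] [AddCommGroup F] [Module 𝕜 F] [TopologicalSpace F]
    [IsTopologicalAddGroup F] [ContinuousConstSMul 𝕜 F]
    (f : Y → MultilinearMap 𝕜 (fun _ : ι => E) F)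
    (hf : ∀ y (σ : Equiv.Perm ι) (v : ι → E), f y (v ∘ σ) = f y v)
    (h : Continuous fun p : Y × E => f p.1 (fun _ => p.2)) :
    Continuous fun p : Y × (ι → E) => f p.1 p.2 := by
  classical
  have hpolar : Continuous fun p : Y × (ι → E) => (Fintype.card ι).factorial • f p.1 p.2 := by
    simp_rw [← MultilinearMap.sum_neg_one_pow_smul_map_diag _ (hf _)]
    refine continuous_finsetSum _ fun T _ => Continuous.fun_const_smul ?_ _
    exact h.comp (f := fun p : Y × (ι → E) => (p.1, ∑ i ∈ Tᶜ, p.2 i)) (by fun_prop)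
  have hn : ((Fintype.card ι).factorial : 𝕜) ≠ 0 := Nat.cast_ne_zero.mpr (Nat.factorial_ne_zero _)
  convert hpolar.const_smul ((Fintype.card ι).factorial : 𝕜)⁻¹ using 2 with p
  simp [← Nat.cast_smul_eq_nsmul 𝕜, smul_smul, hn]

theorem stmt1_general
    {X : Type*} [TopologicalSpace X]
    {E₁ E₂ F : Type*}
    [AddCommGroup E₁] [Module ℝ E₁] [TopologicalSpace E₁]
    [IsTopologicalAddGroup E₁]
    [AddCommGroup E₂] [Module ℝ E₂] [TopologicalSpace E₂]
    [IsTopologicalAddGroup E₂]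
    [AddCommGroup F] [Module ℝ F] [TopologicalSpace F]
    [IsTopologicalAddGroup F] [ContinuousSMul ℝ F]
    (k l : ℕ)
    (M : X → MultilinearMap ℝ (fun _ : Fin k => E₁)
          (MultilinearMap ℝ (fun _ : Fin l => E₂) F))
    (hsymm₁ : ∀ (x : X) (σ : Equiv.Perm (Fin k)) (v : Fin k → E₁),
      M x (v ∘ σ) = M x v)
    (hsymm₂ : ∀ (x : X) (v : Fin k → E₁) (σ : Equiv.Perm (Fin l))
      (w : Fin l → E₂), M x v (w ∘ σ) = M x v w) :
    Continuous (fun p : X × (Fin k → E₁) × (Fin l → E₂) => M p.1 p.2.1 p.2.2) ↔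
      Continuous (fun p : X × E₁ × E₂ =>
        M p.1 (fun _ => p.2.1) (fun _ => p.2.2)) := by
  refine ⟨fun h => h.comp (f := fun p : X × E₁ × E₂ => (p.1, fun _ => p.2.1, fun _ => p.2.2))
    (by fun_prop), fun h => ?_⟩
  have h₂ : Continuous fun p : (X × E₁) × (Fin l → E₂) => M p.1.1 (fun _ => p.1.2) p.2 :=
    continuous_of_continuous_diag (fun y : X × E₁ => M y.1 fun _ => y.2) (fun y => hsymm₂ y.1 _)
      (h.comp (f := fun p : (X × E₁) × E₂ => (p.1.1, p.1.2, p.2)) (by fun_prop))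
  have h₁ : Continuous fun p : (X × (Fin l → E₂)) × (Fin k → E₁) => M p.1.1 p.2 p.1.2 :=
    continuous_of_continuous_diag (fun y : X × (Fin l → E₂) =>
      (MultilinearMap.evalₗ y.2).compMultilinearMap (M y.1))
      (fun y σ v => congrArg (· y.2) (hsymm₁ y.1 σ v))
      (h₂.comp (f := fun p : (X × (Fin l → E₂)) × E₁ => ((p.1.1, p.2), p.1.2)) (by fun_prop))
  exact h₁.comp (f := fun p : X × (Fin k → E₁) × (Fin l → E₂) => ((p.1, p.2.2), p.2.1))
    (by fun_prop)

/-- Double polarization: a map `f : X × E₁ᵏ × E₂ˡ → F` which is symmetric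
`k`-linear in the `E₁`-block and symmetric `l`-linear in the `E₂`-block
(for each fixed `x`) is continuous iff
`g(x,v,w) := f(x,v,…,v,w,…,w)` is continuous. -/
theorem stmt1
    {X : Type*} [TopologicalSpace X]
    {E₁ E₂ F : Type*}
    [AddCommGroup E₁] [Module ℝ E₁] [TopologicalSpace E₁]
    [IsTopologicalAddGroup E₁] [ContinuousSMul ℝ E₁]
    [AddCommGroup E₂] [Module ℝ E₂] [TopologicalSpace E₂]
    [IsTopologicalAddGroup E₂] [ContinuousSMul ℝ E₂]
    [AddCommGroup F] [Module ℝ F] [TopologicalSpace F]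
    [IsTopologicalAddGroup F] [ContinuousSMul ℝ F]
    (k l : ℕ) (hk : 1 ≤ k) (hl : 1 ≤ l)
    (M : X → MultilinearMap ℝ (fun _ : Fin k => E₁)
          (MultilinearMap ℝ (fun _ : Fin l => E₂) F))
    (hsymm₁ : ∀ (x : X) (σ : Equiv.Perm (Fin k)) (v : Fin k → E₁),
      M x (v ∘ σ) = M x v)
    (hsymm₂ : ∀ (x : X) (v : Fin k → E₁) (σ : Equiv.Perm (Fin l))
      (w : Fin l → E₂), M x v (w ∘ σ) = M x v w) :
    Continuous (fun p : X × (Fin k → E₁) × (Fin l → E₂) => M p.1 p.2.1 p.2.2) ↔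
      Continuous (fun p : X × E₁ × E₂ =>
        M p.1 (fun _ => p.2.1) (fun _ => p.2.2)) :=
  stmt1_general k l M hsymm₁ hsymm₂
end

section
/- Let E be a Banach space, J ⊆ ℝ a nondegenerate interval, and r a natural number (or ∞). Then the map Λ : C^{r+1}(J, E) → C(J, E) × C^r(J, E), γ ↦ (γ, γ'), is a linear topological embedding with closed image, where all function spaces carry the compact-open C^k topologies. -/
open scoped UniformConvergence

/-- The space `C^r(J,E)` of `r`-times continuously differentiable maps on `J`
(realized as functions on `ℝ` vanishing off `J`, which are `C^r` on `J`). -/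
def CrFun (E : Type*) [NormedAddCommGroup E] [NormedSpace ℝ E]
    (J : Set ℝ) (r : ℕ) : Type _ :=
  {γ : ℝ → E // ContDiffOn ℝ r γ J ∧ ∀ t ∉ J, γ t = 0}

namespace CrFun

variable {E : Type*} [NormedAddCommGroup E] [NormedSpace ℝ E] {J : Set ℝ} {r : ℕ}

instance : Add (CrFun E J r) :=
  ⟨fun γ η => ⟨γ.1 + η.1, ⟨γ.2.1.add η.2.1,
    fun t ht => by simp [Pi.add_apply, γ.2.2 t ht, η.2.2 t ht]⟩⟩⟩

instance : SMul ℝ (CrFun E J r) :=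
  ⟨fun a γ => ⟨a • γ.1, ⟨γ.2.1.const_smul a,
    fun t ht => by simp [Pi.smul_apply, γ.2.2 t ht]⟩⟩⟩

/-- The family of iterated derivatives, viewed in the space of functions on `J`
with the topology of uniform convergence on compact subsets of `J`
(i.e. the compact-open topology). -/
noncomputable def iota (γ : CrFun E J r) :
    Fin (r + 1) → (J →ᵤ[{K : Set J | IsCompact K}] E) :=
  fun i => UniformOnFun.ofFun _
    (fun x : J => iteratedDerivWithin (i : ℕ) γ.1 J (x : ℝ))

/-- The compact-open `C^r`-topology. -/
noncomputable instance : TopologicalSpace (CrFun E J r) :=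
  TopologicalSpace.induced iota inferInstance

end CrFun

/-!
The derivatives of `γ` of orders `0, …, r + 1`, which define the topology of `C^{r+1}`, are
the derivatives of order `0` of `γ` and of orders `0, …, r` of `γ'`; so they depend continuously
on `Λ γ = (γ, γ')`, and `Λ` is an embedding. By the fundamental theorem of calculus, used in both
directions, the image of `Λ` consists of the pairs `(f, g)` with `f y - f x = ∫ t in x..y, g t`
for all `x, y ∈ J`. As `[x, y] ⊆ J` is compact, both sides of this identity are continuous in
`(f, g)` for the compact-open topologies, so the image is closed.
-/

open Set Filter Topology MeasureTheory

section Calculus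

variable {E : Type*} [NormedAddCommGroup E] [NormedSpace ℝ E]

theorem TendstoUniformlyOn.tendsto_intervalIntegral {ι : Type*} {l : Filter ι}
    {F : ι → ℝ → E} {f : ℝ → E} {a b : ℝ} (h : TendstoUniformlyOn F f l (uIcc a b))
    (hF : ∀ᶠ i in l, IntervalIntegrable (F i) volume a b) (hf : IntervalIntegrable f volume a b) :
    Tendsto (fun i => ∫ x in a..b, F i x) l (𝓝 (∫ x in a..b, f x)) := by
  rw [Metric.tendsto_nhds]
  intro ε hε
  have hδ : 0 < ε / (|b - a| + 1) := by positivity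
  filter_upwards [hF, Metric.tendstoUniformlyOn_iff.1 h _ hδ] with i hFi hi
  rw [dist_eq_norm, ← intervalIntegral.integral_sub hFi hf]
  calc ‖∫ x in a..b, F i x - f x‖ ≤ ε / (|b - a| + 1) * |b - a| :=
        intervalIntegral.norm_integral_le_of_norm_le_const fun x hx => by
          rw [← dist_eq_norm, dist_comm]; exact (hi x (uIoc_subset_uIcc hx)).le
    _ < ε := by
        rw [div_mul_eq_mul_div, div_lt_iff₀ (by positivity)]
        nlinarith [abs_nonneg (b - a)]

variable [CompleteSpace E] {J : Set ℝ} {f g : ℝ → E}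

theorem sub_eq_integral_derivWithin (hJo : J.OrdConnected) (hJ : UniqueDiffOn ℝ J)
    (hf : ContDiffOn ℝ 1 f J) {x y : ℝ} (hx : x ∈ J) (hy : y ∈ J) :
    f y - f x = ∫ t in x..y, derivWithin f J t := by
  have hxy : uIcc x y ⊆ J := hJo.uIcc_subset hx hy
  refine (intervalIntegral.integral_eq_sub_of_hasDeriv_right (hf.continuousOn.mono hxy)
    (fun t ht => ?_) ((hf.continuousOn_derivWithin hJ le_rfl).mono hxy).intervalIntegrable).symm
  have htJ : J ∈ 𝓝 t := mem_interior_iff_mem_nhds.1 <|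
    interior_mono hxy (by rwa [uIcc, interior_Icc])
  exact ((hf.differentiableOn one_ne_zero t (mem_of_mem_nhds htJ)).hasDerivWithinAt.hasDerivAt
    htJ).hasDerivWithinAt

theorem hasDerivWithinAt_of_sub_eq_integral (hJo : J.OrdConnected) (hg : ContinuousOn g J)
    (hfg : ∀ x ∈ J, ∀ y ∈ J, f y - f x = ∫ t in x..y, g t) {x : ℝ} (hx : x ∈ J) :
    HasDerivWithinAt f (g x) J x := by
  rw [hasDerivWithinAt_iff_isLittleO, Asymptotics.isLittleO_iff]
  intro c hc
  obtain ⟨δ, hδ, hgδ⟩ := Metric.continuousWithinAt_iff.1 (hg x hx) c hc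
  filter_upwards [self_mem_nhdsWithin, nhdsWithin_le_nhds (Metric.ball_mem_nhds x hδ)]
    with y hy hyx
  have hxy : uIcc x y ⊆ J := hJo.uIcc_subset hx hy
  have hremainder : f y - f x - (y - x) • g x = ∫ t in x..y, g t - g x := by
    rw [hfg x hx y hy, intervalIntegral.integral_sub ((hg.mono hxy).intervalIntegrable)
      intervalIntegrable_const, intervalIntegral.integral_const]
  rw [hremainder, Real.norm_eq_abs]
  refine intervalIntegral.norm_integral_le_of_norm_le_const fun t ht => ?_
  have htx : dist t x < δ :=
    (Real.dist_le_of_mem_uIcc (uIoc_subset_uIcc ht) left_mem_uIcc).trans_lt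
      (by rwa [dist_comm])
  rw [← dist_eq_norm]
  exact (hgδ (hxy (uIoc_subset_uIcc ht)) htx).le

theorem contDiffOn_succ_of_sub_eq_integral {r : ℕ} (hJo : J.OrdConnected) (hJ : UniqueDiffOn ℝ J)
    (hg : ContDiffOn ℝ r g J) (hfg : ∀ x ∈ J, ∀ y ∈ J, f y - f x = ∫ t in x..y, g t) :
    ContDiffOn ℝ (r + 1 : ℕ) f J := by
  have hderiv (x) (hx : x ∈ J) : HasDerivWithinAt f (g x) J x :=
    hasDerivWithinAt_of_sub_eq_integral hJo hg.continuousOn hfg hx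
  rw [Nat.cast_succ, contDiffOn_succ_iff_derivWithin hJ]
  refine ⟨fun x hx => (hderiv x hx).differentiableWithinAt, by simp, ?_⟩
  exact hg.congr fun x hx => (hderiv x hx).derivWithin (hJ x hx)

end Calculus

namespace CrFun

variable {E : Type*} [NormedAddCommGroup E] [NormedSpace ℝ E] {J : Set ℝ} {k r : ℕ}

def castLE (h : k ≤ r) (γ : CrFun E J r) : CrFun E J k :=
  ⟨γ.1, γ.2.1.of_le (by exact_mod_cast h), γ.2.2⟩

noncomputable def deriv (hJ : UniqueDiffOn ℝ J) (γ : CrFun E J (r + 1)) : CrFun E J r :=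
  ⟨J.indicator (derivWithin γ.1 J),
    (γ.2.1.derivWithin hJ (by norm_cast)).congr fun _ ht => indicator_of_mem ht _,
    fun _ ht => indicator_of_notMem ht _⟩

variable (hJ : UniqueDiffOn ℝ J)

theorem deriv_apply (γ : CrFun E J (r + 1)) {t : ℝ} (ht : t ∈ J) :
    (deriv hJ γ).1 t = derivWithin γ.1 J t :=
  indicator_of_mem ht _

theorem deriv_add (γ η : CrFun E J (r + 1)) : deriv hJ (γ + η) = deriv hJ γ + deriv hJ η := by
  refine Subtype.ext ((indicator_congr fun t ht => ?_).trans (indicator_add' _ _ _))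
  exact derivWithin_add (γ.2.1.differentiableOn (by simp) t ht)
    (η.2.1.differentiableOn (by simp) t ht)

theorem deriv_smul (a : ℝ) (γ : CrFun E J (r + 1)) : deriv hJ (a • γ) = a • deriv hJ γ := by
  refine Subtype.ext ((indicator_congr fun t ht => ?_).trans (indicator_const_smul _ _ _))
  exact derivWithin_const_smul a (γ.2.1.differentiableOn (by simp) t ht)

theorem iota_castLE (h : k ≤ r) (γ : CrFun E J r) (i : Fin (k + 1)) :
    iota (castLE h γ) i = iota γ (Fin.castLE (by omega) i) :=
  rfl

theorem iota_deriv (γ : CrFun E J (r + 1)) (i : Fin (r + 1)) :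
    iota (deriv hJ γ) i = iota γ i.succ := by
  simp only [iota, Fin.val_succ, iteratedDerivWithin_succ']
  congr 1
  funext x
  exact iteratedDerivWithin_congr (fun t ht => indicator_of_mem ht _) x.2

theorem continuous_iota : Continuous (iota : CrFun E J r → _) :=
  continuous_induced_dom

theorem isEmbedding_iota : IsEmbedding (iota : CrFun E J r → _) := by
  refine ⟨⟨rfl⟩, fun γ η h => Subtype.ext (funext fun t => ?_)⟩
  by_cases ht : t ∈ J
  · simpa [iota, iteratedDerivWithin_zero] using
      congrFun (congrArg (fun F => UniformOnFun.toFun _ (F 0)) h) ⟨t, ht⟩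
  · rw [γ.2.2 t ht, η.2.2 t ht]

theorem continuous_castLE (h : k ≤ r) : Continuous (castLE h : CrFun E J r → CrFun E J k) :=
  continuous_induced_rng.2 <| continuous_pi fun i => by
    simpa only [Function.comp_def, iota_castLE] using (continuous_apply _).comp continuous_iota

theorem continuous_deriv : Continuous (deriv hJ : CrFun E J (r + 1) → CrFun E J r) :=
  continuous_induced_rng.2 <| continuous_pi fun i => by
    simpa only [Function.comp_def, iota_deriv] using (continuous_apply _).comp continuous_iota

theorem tendstoUniformlyOn_nhds (γ₀ : CrFun E J r) {K : Set ℝ} (hK : IsCompact K) (hKJ : K ⊆ J) :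
    TendstoUniformlyOn (fun γ : CrFun E J r => γ.1) γ₀.1 (𝓝 γ₀) K := by
  have hK' : IsCompact (Subtype.val ⁻¹' K : Set J) := by
    rwa [Subtype.isCompact_iff, Subtype.image_preimage_coe, inter_eq_right.2 hKJ]
  have h := UniformOnFun.tendsto_iff_tendstoUniformlyOn.1
    (((continuous_apply 0).comp continuous_iota).tendsto γ₀) _ hK'
  intro u hu
  filter_upwards [h u hu] with γ hγ x hx
  simpa [iota, iteratedDerivWithin_zero] using hγ ⟨x, hKJ hx⟩ hx

theorem continuous_eval {t : ℝ} (ht : t ∈ J) : Continuous fun γ : CrFun E J r => γ.1 t :=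
  continuous_iff_continuousAt.2 fun γ₀ =>
    (tendstoUniformlyOn_nhds γ₀ isCompact_singleton (singleton_subset_iff.2 ht)).tendsto_at rfl

theorem continuous_intervalIntegral (hJo : J.OrdConnected) {x y : ℝ} (hx : x ∈ J) (hy : y ∈ J) :
    Continuous fun γ : CrFun E J r => ∫ t in x..y, γ.1 t := by
  have hxy : uIcc x y ⊆ J := hJo.uIcc_subset hx hy
  have hint (γ : CrFun E J r) : IntervalIntegrable γ.1 volume x y :=
    (γ.2.1.continuousOn.mono hxy).intervalIntegrable
  exact continuous_iff_continuousAt.2 fun γ₀ =>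
    (tendstoUniformlyOn_nhds γ₀ isCompact_uIcc hxy).tendsto_intervalIntegral (.of_forall hint)
      (hint γ₀)

noncomputable def withDeriv (γ : CrFun E J (r + 1)) : CrFun E J 0 × CrFun E J r :=
  (castLE (Nat.zero_le _) γ, deriv hJ γ)

theorem withDeriv_add (γ η : CrFun E J (r + 1)) :
    withDeriv hJ (γ + η) = withDeriv hJ γ + withDeriv hJ η :=
  Prod.ext rfl (deriv_add hJ γ η)

theorem withDeriv_smul (a : ℝ) (γ : CrFun E J (r + 1)) :
    withDeriv hJ (a • γ) = a • withDeriv hJ γ :=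
  Prod.ext rfl (deriv_smul hJ a γ)

theorem iota_eq_cons_withDeriv (γ : CrFun E J (r + 1)) :
    iota γ = Fin.cons (iota (withDeriv hJ γ).1 0) (iota (withDeriv hJ γ).2) := by
  funext i
  cases i using Fin.cases with
  | zero => rfl
  | succ i => exact (iota_deriv hJ γ i).symm

theorem isEmbedding_withDeriv : IsEmbedding (withDeriv hJ : CrFun E J (r + 1) → _) := by
  have hcons : Continuous fun p : CrFun E J 0 × CrFun E J r =>
      (Fin.cons (iota p.1 0) (iota p.2) : Fin (r + 2) → _) :=
    ((continuous_apply 0).comp (continuous_iota.comp continuous_fst)).finCons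
      (continuous_iota.comp continuous_snd)
  refine .of_comp ((continuous_castLE _).prodMk (continuous_deriv hJ)) hcons ?_
  convert isEmbedding_iota using 1
  exact funext fun γ => (iota_eq_cons_withDeriv hJ γ).symm

variable [CompleteSpace E]

theorem sub_eq_integral_deriv (hJo : J.OrdConnected) (γ : CrFun E J (r + 1)) {x y : ℝ}
    (hx : x ∈ J) (hy : y ∈ J) :
    γ.1 y - γ.1 x = ∫ t in x..y, (deriv hJ γ).1 t := by
  rw [sub_eq_integral_derivWithin hJo hJ (γ.2.1.of_le (by norm_cast; omega)) hx hy]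
  exact intervalIntegral.integral_congr fun t ht =>
    (deriv_apply hJ γ (hJo.uIcc_subset hx hy ht)).symm

theorem range_withDeriv (hJo : J.OrdConnected) : range (withDeriv hJ : CrFun E J (r + 1) → _) =
    {p | ∀ x ∈ J, ∀ y ∈ J, p.1.1 y - p.1.1 x = ∫ t in x..y, p.2.1 t} := by
  ext p
  constructor
  · rintro ⟨γ, rfl⟩ x hx y hy
    exact sub_eq_integral_deriv hJ hJo γ hx hy
  · intro hp
    refine ⟨⟨p.1.1, contDiffOn_succ_of_sub_eq_integral hJo hJ p.2.2.1 hp, p.1.2.2⟩,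
      Prod.ext rfl (Subtype.ext (funext fun t => ?_))⟩
    show (deriv hJ _).1 t = p.2.1 t
    by_cases ht : t ∈ J
    · exact (deriv_apply hJ _ ht).trans <|
        (hasDerivWithinAt_of_sub_eq_integral hJo p.2.2.1.continuousOn hp ht).derivWithin (hJ t ht)
    · exact (indicator_of_notMem ht _).trans (p.2.2.2 t ht).symm

theorem isClosed_range_withDeriv (hJo : J.OrdConnected) :
    IsClosed (range (withDeriv hJ : CrFun E J (r + 1) → _)) := by
  rw [range_withDeriv hJ hJo]
  simp only [ofPred_forall]
  exact isClosed_biInter fun x hx => isClosed_biInter fun y hy => isClosed_eq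
    (((continuous_eval hy).sub (continuous_eval hx)).comp continuous_fst)
    ((continuous_intervalIntegral hJo hx hy).comp continuous_snd)

end CrFun

/-- For a nondegenerate interval `J ⊆ ℝ` and a Banach space `E`, the map
`Λ : C^{r+1}(J,E) → C(J,E) × C^r(J,E)`, `γ ↦ (γ, γ')`, is a linear
topological embedding with closed image (all spaces with the compact-open
`C^k` topologies). -/
theorem stmt3 (E : Type*) [NormedAddCommGroup E] [NormedSpace ℝ E]
    [CompleteSpace E] (J : Set ℝ) (hJconv : Convex ℝ J)
    (hJne : (interior J).Nonempty) (r : ℕ) :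
    ∃ Λ : CrFun E J (r + 1) → CrFun E J 0 × CrFun E J r,
      (∀ γ : CrFun E J (r + 1),
        (Λ γ).1.1 = γ.1 ∧ ∀ t ∈ J, (Λ γ).2.1 t = derivWithin γ.1 J t) ∧
      (∀ γ η : CrFun E J (r + 1), Λ (γ + η) = Λ γ + Λ η) ∧
      (∀ (a : ℝ) (γ : CrFun E J (r + 1)), Λ (a • γ) = a • Λ γ) ∧
      Topology.IsEmbedding Λ ∧ IsClosed (Set.range Λ) := by
  have hJ : UniqueDiffOn ℝ J := uniqueDiffOn_convex hJconv hJne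
  exact ⟨CrFun.withDeriv hJ, fun γ => ⟨rfl, fun _ ht => CrFun.deriv_apply hJ γ ht⟩,
    CrFun.withDeriv_add hJ, CrFun.withDeriv_smul hJ, CrFun.isEmbedding_withDeriv hJ,
    CrFun.isClosed_range_withDeriv hJ hJconv.ordConnected⟩
end

section
/- Let E₁, E₂, F be Banach spaces, U ⊆ E₁ and V ⊆ E₂ open sets, and f : U × V → F a map which is C¹ (continuously Fréchet differentiable). Fix w ∈ E₁ and v ∈ E₂. If the iterated directional derivative D_{(w,0)} D_{(0,v)} f exists at every point of U × V and is continuous as a map U × V → F, then the iterated directional derivative D_{(0,v)} D_{(w,0)} f also exists everywhere and coincides with D_{(w,0)} D_{(0,v)} f. -/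
/-!
Fix `p` and write `f (p + s • a + t • b) - f (p + s • a) = ∫ τ in 0..t, D_b f (p + s • a + τ • b)`.
Differentiating at `s = 0` under the integral sign, which is legitimate because the
`s`-derivative `D_a D_b f` of the integrand is continuous and hence bounded on a compact square,
gives `D_a f (p + t • b) - D_a f p = ∫ τ in 0..t, D_a D_b f (p + τ • b)`. The fundamental theorem
of calculus in `t` then shows that `D_b D_a f p` exists and equals `D_a D_b f p`.
-/

open Set Filter Topology MeasureTheory intervalIntegral
open scoped Interval

section LineShift

variable {𝕜 E F : Type*} [NontriviallyNormedField 𝕜] [NormedAddCommGroup E] [NormedSpace 𝕜 E]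
  [NormedAddCommGroup F] [NormedSpace 𝕜 F] {f : E → F} {f' : F} {x v : E} {t : 𝕜}

lemma HasLineDerivAt.hasDerivAt_add_smul (hf : HasLineDerivAt 𝕜 f f' (x + t • v) v) :
    HasDerivAt (fun s => f (x + s • v)) f' t := by
  have := HasDerivAt.comp_sub_const t t (by rwa [sub_self])
  convert this using 2 with s
  rw [add_assoc, ← add_smul, add_sub_cancel]

end LineShift

lemma IsOpen.exists_pos_forall_add_smul_add_smul_mem {E : Type*} [NormedAddCommGroup E]
    [NormedSpace ℝ E] {S : Set E} (hS : IsOpen S) {p : E} (hp : p ∈ S) (a b : E) :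
    ∃ ε > (0 : ℝ), ∀ s ∈ Icc (-ε) ε, ∀ τ ∈ Icc (-ε) ε, p + s • a + τ • b ∈ S := by
  have : ∀ᶠ z : ℝ × ℝ in 𝓝 0, p + z.1 • a + z.2 • b ∈ S :=
    (by fun_prop : Continuous fun z : ℝ × ℝ => p + z.1 • a + z.2 • b).continuousAt
      |>.preimage_mem_nhds (by simpa using hS.mem_nhds hp)
  obtain ⟨ε, hε, hball⟩ := Metric.nhds_basis_closedBall.eventually_iff.1 this
  refine ⟨ε, hε, fun s hs τ hτ => hball (x := (s, τ)) ?_⟩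
  simpa [Prod.norm_def, abs_le] using ⟨hs, hτ⟩

section MixedPartials

variable {E F : Type*} [NormedAddCommGroup E] [NormedSpace ℝ E]
  [NormedAddCommGroup F] [NormedSpace ℝ F] {f : E → F} {f' : F} {p a b : E} {s τ : ℝ}

lemma HasLineDerivAt.hasDerivAt_add_smul_add_smul_left
    (hf : HasLineDerivAt ℝ f f' (p + s • a + τ • b) a) :
    HasDerivAt (fun s => f (p + s • a + τ • b)) f' s := by
  rw [add_right_comm] at hf
  simpa only [add_right_comm] using hf.hasDerivAt_add_smul

lemma HasLineDerivAt.hasDerivAt_add_smul_add_smul_right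
    (hf : HasLineDerivAt ℝ f f' (p + s • a + τ • b) b) :
    HasDerivAt (fun τ => f (p + s • a + τ • b)) f' τ :=
  hf.hasDerivAt_add_smul

variable [CompleteSpace F] {fa fb h : E → F} {S : Set E} {ε t : ℝ}

lemma sub_eq_intervalIntegral_of_hasLineDerivAt (hε : 0 < ε)
    (hsq : ∀ s ∈ Icc (-ε) ε, ∀ τ ∈ Icc (-ε) ε, p + s • a + τ • b ∈ S)
    (hfa : ∀ q ∈ S, HasLineDerivAt ℝ f (fa q) q a)
    (hfb : ∀ q ∈ S, HasLineDerivAt ℝ f (fb q) q b) (hfb_cont : ContinuousOn fb S)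
    (hab : ∀ q ∈ S, HasLineDerivAt ℝ fb (h q) q a) (hh : ContinuousOn h S)
    (ht : t ∈ Icc (-ε) ε) :
    fa (p + t • b) - fa p = ∫ τ in 0..t, h (p + τ • b) := by
  set I := Icc (-ε) ε
  have hI : I ∈ 𝓝 (0 : ℝ) := Icc_mem_nhds (neg_lt_zero.2 hε) hε
  have h0 : (0 : ℝ) ∈ I := mem_of_mem_nhds hI
  have hsub : Ι 0 t ⊆ I := uIoc_subset_uIcc.trans (uIcc_subset_Icc h0 ht)
  have hcont_sq : ∀ {g : E → F}, ContinuousOn g S →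
      ContinuousOn (fun z : ℝ × ℝ => g (p + z.1 • a + z.2 • b)) (I ×ˢ I) :=
    fun hg => hg.comp (by fun_prop) fun z hz => hsq _ hz.1 _ hz.2
  have hint : ∀ {g : E → F}, ContinuousOn g S → ∀ s ∈ I,
      IntervalIntegrable (fun τ => g (p + s • a + τ • b)) volume 0 t := fun hg s hs =>
    ((hcont_sq hg).comp (continuous_const.prodMk continuous_id).continuousOn
      fun τ hτ => ⟨hs, uIcc_subset_Icc h0 ht hτ⟩).intervalIntegrable
  have hFTC : ∀ s ∈ I,
      ∫ τ in 0..t, fb (p + s • a + τ • b) = f (p + s • a + t • b) - f (p + s • a) := by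
    intro s hs
    have hderiv : ∀ τ ∈ [[0, t]],
        HasDerivAt (fun τ => f (p + s • a + τ • b)) (fb (p + s • a + τ • b)) τ := fun τ hτ =>
      (hfb _ (hsq s hs τ (uIcc_subset_Icc h0 ht hτ))).hasDerivAt_add_smul_add_smul_right
    rw [integral_eq_sub_of_hasDerivAt hderiv (hint hfb_cont s hs)]
    simp
  obtain ⟨C, hC⟩ := (isCompact_Icc.prod isCompact_Icc).exists_bound_of_continuousOn (hcont_sq hh)
  have hΦ : HasDerivAt (fun s : ℝ => ∫ τ in 0..t, fb (p + s • a + τ • b))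
      (∫ τ in 0..t, h (p + τ • b)) 0 := by
    have := hasDerivAt_integral_of_dominated_loc_of_deriv_le (x₀ := (0 : ℝ))
      (F := fun s τ => fb (p + s • a + τ • b)) (F' := fun s τ => h (p + s • a + τ • b))
      (bound := fun _ => C) hI ?_ (hint hfb_cont 0 h0) ?_ ?_ intervalIntegrable_const ?_
    · simpa using this.2
    · filter_upwards [hI] with s hs
      exact (intervalIntegrable_iff.1 (hint hfb_cont s hs)).aestronglyMeasurable
    · exact (intervalIntegrable_iff.1 (hint hh 0 h0)).aestronglyMeasurable
    · exact ae_of_all _ fun τ hτ s hs => hC (s, τ) ⟨hs, hsub hτ⟩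
    · exact ae_of_all _ fun τ hτ s hs =>
        (hab _ (hsq s hs τ (hsub hτ))).hasDerivAt_add_smul_add_smul_left
  have hdiff : HasDerivAt (fun s : ℝ => f (p + s • a + t • b) - f (p + s • a))
      (fa (p + t • b) - fa p) 0 := by
    refine .sub ?_ ?_
    · simpa using (hfa _ (hsq 0 h0 t ht)).hasDerivAt_add_smul_add_smul_left
    · exact hfa p (by simpa using hsq 0 h0 0 h0)
  exact hdiff.unique (hΦ.congr_of_eventuallyEq (eventuallyEq_of_mem hI hFTC).symm)

theorem hasLineDerivAt_swap_of_continuousOn (hS : IsOpen S)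
    (hfa : ∀ q ∈ S, HasLineDerivAt ℝ f (fa q) q a)
    (hfb : ∀ q ∈ S, HasLineDerivAt ℝ f (fb q) q b) (hfb_cont : ContinuousOn fb S)
    (hab : ∀ q ∈ S, HasLineDerivAt ℝ fb (h q) q a) (hh : ContinuousOn h S) (hp : p ∈ S) :
    HasLineDerivAt ℝ fa (h p) p b := by
  obtain ⟨ε, hε, hsq⟩ := hS.exists_pos_forall_add_smul_add_smul_mem hp a b
  have hI : Icc (-ε) ε ∈ 𝓝 (0 : ℝ) := Icc_mem_nhds (neg_lt_zero.2 hε) hε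
  have hline : ContinuousOn (fun τ : ℝ => h (p + τ • b)) (Icc (-ε) ε) :=
    hh.comp (by fun_prop) fun τ hτ => by simpa using hsq 0 (mem_of_mem_nhds hI) τ hτ
  have hFTC : HasDerivAt (fun t => fa p + ∫ τ in 0..t, h (p + τ • b)) (h p) 0 := by
    simpa using (integral_hasDerivAt_right
      (hline.mono (uIcc_subset_Icc (mem_of_mem_nhds hI) (mem_of_mem_nhds hI))).intervalIntegrable
      (AEStronglyMeasurable.stronglyMeasurableAtFilter_of_mem
        (hline.aestronglyMeasurable measurableSet_Icc) hI)
      (hline.continuousAt hI)).const_add (fa p)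
  refine hFTC.congr_of_eventuallyEq (eventuallyEq_of_mem hI fun t ht => ?_)
  rw [← sub_eq_intervalIntegral_of_hasLineDerivAt hε hsq hfa hfb hfb_cont hab hh ht, add_sub_cancel]

end MixedPartials

/-- If `f : U × V → F` is `C¹` and the iterated directional derivative
`D_{(w,0)} D_{(0,v)} f` exists at every point of `U × V` and is continuous
there, then `D_{(0,v)} D_{(w,0)} f` also exists everywhere on `U × V` and
coincides with `D_{(w,0)} D_{(0,v)} f`. -/
theorem stmt4
    {E₁ E₂ F : Type*} [NormedAddCommGroup E₁] [NormedSpace ℝ E₁]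
    [NormedAddCommGroup E₂] [NormedSpace ℝ E₂]
    [NormedAddCommGroup F] [NormedSpace ℝ F] [CompleteSpace F]
    {U : Set E₁} {V : Set E₂} (hU : IsOpen U) (hV : IsOpen V)
    (f : E₁ × E₂ → F) (hf : ContDiffOn ℝ 1 f (U ×ˢ V))
    (w : E₁) (v : E₂) (h : E₁ × E₂ → F)
    (hexists : ∀ p ∈ U ×ˢ V,
      HasLineDerivAt ℝ (fun q => lineDeriv ℝ f q ((0 : E₁), v)) (h p) p
        (w, (0 : E₂)))
    (hcont : ContinuousOn h (U ×ˢ V)) :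
    ∀ p ∈ U ×ˢ V,
      HasLineDerivAt ℝ (fun q => lineDeriv ℝ f q (w, (0 : E₂))) (h p) p
        ((0 : E₁), v) := by
  have hUV : IsOpen (U ×ˢ V) := hU.prod hV
  have hdiff : ∀ p ∈ U ×ˢ V, DifferentiableAt ℝ f p := fun p hp =>
    (hf.differentiableOn one_ne_zero).differentiableAt (hUV.mem_nhds hp)
  have hline_cont : ContinuousOn (fun q => lineDeriv ℝ f q ((0 : E₁), v)) (U ×ˢ V) :=
    ((hf.continuousOn_fderiv_of_isOpen hUV le_rfl).clm_apply continuousOn_const).congr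
      fun q hq => (hdiff q hq).lineDeriv_eq_fderiv
  exact fun p hp => hasLineDerivAt_swap_of_continuousOn hUV
    (fun q hq => (hdiff q hq).lineDifferentiableAt.hasLineDerivAt)
    (fun q hq => (hdiff q hq).lineDifferentiableAt.hasLineDerivAt) hline_cont hexists hcont hp
end

section
/- Let E be a Banach space, J ⊆ ℝ a nondegenerate interval, Z a normed space, and U ⊆ E, P ⊆ Z open sets. Let f : J × U × P → E be continuous and locally Lipschitz in the U-variable, uniformly in the other variables near every point. Then for all t₀ ∈ J, z₀ ∈ U, q₀ ∈ P, there exist a convex relative neighbourhood J₀ ⊆ J of t₀ and open neighbourhoods U₀ ⊆ U of z₀ and P₀ ⊆ P of q₀ such that for all (τ₀, x₀, p₀) ∈ J₀ × U₀ × P₀, the initial value problem x'(t) = f(t, x(t), p₀), x(τ₀) = x₀ has a unique solution φ_{τ₀,x₀,p₀} : J₀ → U, and for fixed τ₀ the map (t, x₀, p₀) ↦ φ_{τ₀,x₀,p₀}(t) is continuous on J₀ × U₀ × P₀. -/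
/-!
Fix `(t₀, z₀, q₀)`. Continuity of `f` and the Lipschitz condition at this one point give a box
`J₀ × closedBall z₀ ρ × ball q₀ ρ` on which `‖f‖ ≤ C` and `f` is `K`-Lipschitz in `x`; shrinking
`J₀` until `C · |J₀| ≤ ρ / 2`, Picard–Lindelöf gives, for every datum in
`J₀ × ball z₀ (ρ / 2) × ball q₀ ρ`, a solution that stays in `closedBall z₀ ρ`.

Uniqueness among all `U`-valued solutions: where two solutions agree, Grönwall's inequality with
zero data makes them agree nearby, and where they differ they differ nearby, so the coincidence
set is clopen in the connected `J₀`.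

Continuity: for a nearby parameter `p`, the solution `β` with parameter `p₁` is an approximate
solution of the equation with parameter `p`, with defect `sup_t ‖f (t, β t, p₁) - f (t, β t, p)‖`,
which tends to `0` by compactness of `J₀`. Grönwall's inequality then makes the solutions converge
uniformly on `J₀` as `(x, p) → (x₁, p₁)`, and continuity of `β` in `t` finishes.
-/

open Set Metric Filter Topology
open scoped NNReal

section Order

variable {α : Type*} [LinearOrder α] [TopologicalSpace α] [OrderTopology α] {J : Set α}
  {t₀ a b : α}

theorem exists_mem_Icc_eventually_le (ht₀ : t₀ ∈ J) (hb : t₀ < b) :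
    ∃ d ∈ J, d ∈ Icc t₀ b ∧ ∀ᶠ t in 𝓝[J] t₀, t ≤ d := by
  by_cases h : ∃ s ∈ J, s ∈ Ioc t₀ b
  · obtain ⟨s, hsJ, hs⟩ := h
    exact ⟨s, hsJ, ⟨hs.1.le, hs.2⟩,
      eventually_nhdsWithin_of_eventually_nhds (eventually_le_nhds hs.1)⟩
  · refine ⟨t₀, ht₀, ⟨le_rfl, hb.le⟩, ?_⟩
    filter_upwards [self_mem_nhdsWithin, mem_nhdsWithin_of_mem_nhds (eventually_le_nhds hb)]
      with t htJ htb
    by_contra! hlt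
    exact h ⟨t, htJ, hlt, htb⟩

theorem Set.OrdConnected.exists_Icc_mem_nhdsWithin (hJ : J.OrdConnected) (ht₀ : t₀ ∈ J)
    (ha : a < t₀) (hb : t₀ < b) : ∃ c d, Icc c d ⊆ J ∩ Icc a b ∧ Icc c d ∈ 𝓝[J] t₀ := by
  obtain ⟨d, hdJ, hd, hevd⟩ := exists_mem_Icc_eventually_le ht₀ hb
  obtain ⟨c, hcJ, hc, hevc⟩ := exists_mem_Icc_eventually_le (α := αᵒᵈ) ht₀ ha
  exact ⟨c, d, subset_inter (hJ.out hcJ hdJ) (Icc_subset_Icc hc.2 hd.2), hevc.and hevd⟩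

end Order

theorem exists_pos_gronwallBound_lt (K x : ℝ) {η : ℝ} (hη : 0 < η) :
    ∃ θ > 0, gronwallBound θ K θ x < η := by
  have hlin (θ : ℝ) : gronwallBound θ K θ x = θ * gronwallBound 1 K 1 x := by
    unfold gronwallBound
    split_ifs <;> ring
  have hlim : Tendsto (fun θ ↦ θ * gronwallBound 1 K 1 x) (𝓝[>] 0) (𝓝 0) :=
    ((continuous_id.mul continuous_const).tendsto' 0 0 (zero_mul _)).mono_left
      nhdsWithin_le_nhds
  obtain ⟨θ, hθη, hθ⟩ := ((hlim.eventually (gt_mem_nhds hη)).and self_mem_nhdsWithin).exists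
  exact ⟨θ, hθ, (hlin θ).trans_lt hθη⟩

section ODE

variable {E : Type*} [NormedAddCommGroup E]

def LocallyLipschitzInState (v : ℝ → E → E) (I : Set ℝ) (U : Set E) : Prop :=
  ∀ t ∈ I, ∀ x ∈ U, ∃ K : ℝ≥0, ∃ N ∈ 𝓝[U] x, ∀ᶠ s in 𝓝[I] t, LipschitzOnWith K (v s) N

theorem LocallyLipschitzInState.mono {v : ℝ → E → E} {I J : Set ℝ} {U : Set E}
    (hv : LocallyLipschitzInState v J U) (hIJ : I ⊆ J) : LocallyLipschitzInState v I U :=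
  fun t ht x hx ↦
    let ⟨K, N, hN, hK⟩ := hv t (hIJ ht) x hx
    ⟨K, N, hN, hK.filter_mono (nhdsWithin_mono t hIJ)⟩

variable [NormedSpace ℝ E]

lemma IsIntegralCurveOn.comp_neg {γ : ℝ → E} {v : ℝ → E → E} {s : Set ℝ}
    (hγ : IsIntegralCurveOn γ v s) :
    IsIntegralCurveOn (fun t ↦ γ (-t)) (fun t x ↦ -v (-t) x) (-s) := by
  convert hγ.comp_mul (-1) using 1 <;> ext <;> simp

theorem dist_le_gronwallBound_of_isIntegralCurveOn_Icc {v w : ℝ → E → E} {S : Set E}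
    {K : ℝ≥0} {ψ α : ℝ → E} {a b δ ε : ℝ} (hab : a ≤ b)
    (hv : ∀ t ∈ Icc a b, LipschitzOnWith K (v t) S)
    (hψ : IsIntegralCurveOn ψ w (Icc a b)) (hα : IsIntegralCurveOn α v (Icc a b))
    (hψS : MapsTo ψ (Icc a b) S) (hαS : MapsTo α (Icc a b) S)
    (hwv : ∀ t ∈ Icc a b, dist (w t (ψ t)) (v t (ψ t)) ≤ ε)
    (ha : dist (ψ a) (α a) ≤ δ) :
    dist (ψ b) (α b) ≤ gronwallBound δ K ε (b - a) := by
  have hright {γ : ℝ → E} {u : ℝ → E → E} (hγ : IsIntegralCurveOn γ u (Icc a b)) (t : ℝ)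
      (ht : t ∈ Ico a b) : HasDerivWithinAt γ (u t (γ t)) (Ici t) t :=
    (hγ t (Ico_subset_Icc_self ht)).mono_of_mem_nhdsWithin (Icc_mem_nhdsGE_of_mem ht)
  have hIco : Ico a b ⊆ Icc a b := Ico_subset_Icc_self
  simpa using dist_le_of_approx_trajectories_ODE_of_mem (s := fun _ ↦ S) (εg := 0)
    (fun t ht ↦ hv t (hIco ht)) hψ.continuousOn (hright hψ) (fun t ht ↦ hwv t (hIco ht))
    (fun t ht ↦ hψS (hIco ht)) hα.continuousOn (hright hα) (fun t _ ↦ (dist_self _).le)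
    (fun t ht ↦ hαS (hIco ht)) ha b ⟨hab, le_rfl⟩

theorem dist_le_gronwallBound_of_isIntegralCurveOn {I : Set ℝ} (hI : I.OrdConnected)
    {v w : ℝ → E → E} {S : Set E} {K : ℝ≥0} {ψ α : ℝ → E} {τ δ ε : ℝ}
    (hv : ∀ t ∈ I, LipschitzOnWith K (v t) S)
    (hψ : IsIntegralCurveOn ψ w I) (hα : IsIntegralCurveOn α v I)
    (hψS : MapsTo ψ I S) (hαS : MapsTo α I S)
    (hwv : ∀ t ∈ I, dist (w t (ψ t)) (v t (ψ t)) ≤ ε)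
    (hτ : τ ∈ I) (h₀ : dist (ψ τ) (α τ) ≤ δ) {t : ℝ} (ht : t ∈ I) :
    dist (ψ t) (α t) ≤ gronwallBound δ K ε |t - τ| := by
  rcases le_total τ t with hτt | htτ
  · have hsub : Icc τ t ⊆ I := hI.out hτ ht
    rw [abs_of_nonneg (sub_nonneg.2 hτt)]
    exact dist_le_gronwallBound_of_isIntegralCurveOn_Icc hτt (fun s hs ↦ hv s (hsub hs))
      (hψ.mono hsub) (hα.mono hsub) (hψS.mono_left hsub) (hαS.mono_left hsub)
      (fun s hs ↦ hwv s (hsub hs)) h₀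
  · have hsub : Icc t τ ⊆ I := hI.out ht hτ
    have hmem : MapsTo Neg.neg (Icc (-τ) (-t)) I := fun s hs ↦ hsub ⟨le_neg.2 hs.2, neg_le.1 hs.1⟩
    have hψ' : IsIntegralCurveOn (fun s ↦ ψ (-s)) (fun s x ↦ -w (-s) x) (Icc (-τ) (-t)) := by
      simpa using (hψ.mono hsub).comp_neg
    have hα' : IsIntegralCurveOn (fun s ↦ α (-s)) (fun s x ↦ -v (-s) x) (Icc (-τ) (-t)) := by
      simpa using (hα.mono hsub).comp_neg
    rw [abs_of_nonpos (sub_nonpos.2 htτ), neg_sub]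
    simpa [sub_eq_add_neg, add_comm] using
      dist_le_gronwallBound_of_isIntegralCurveOn_Icc (neg_le_neg htτ)
        (fun s hs ↦ (hv _ (hmem hs)).neg) hψ' hα' (hψS.comp hmem) (hαS.comp hmem)
        (fun s hs ↦ by simpa using hwv _ (hmem hs)) (by simpa using h₀)

section Uniqueness

variable {I : Set ℝ} {v : ℝ → E → E} {U : Set E} {ψ α : ℝ → E} {τ : ℝ}

theorem eventually_eq_of_isIntegralCurveOn (hI : I.OrdConnected)
    (hv : LocallyLipschitzInState v I U)
    (hψ : IsIntegralCurveOn ψ v I) (hα : IsIntegralCurveOn α v I)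
    (hψU : MapsTo ψ I U) (hαU : MapsTo α I U) (hτ : τ ∈ I) (h : ψ τ = α τ) :
    ∀ᶠ t in 𝓝[I] τ, ψ t = α t := by
  obtain ⟨K, N, hN, hK⟩ := hv τ hτ (ψ τ) (hψU hτ)
  have hnear {γ : ℝ → E} (hγ : IsIntegralCurveOn γ v I) (hγU : MapsTo γ I U)
      (hγτ : γ τ = ψ τ) : ∀ᶠ t in 𝓝[I] τ, γ t ∈ N := by
    refine tendsto_nhdsWithin_iff.2 ⟨?_, eventually_mem_nhdsWithin.mono hγU⟩ hN
    exact hγτ ▸ hγ.continuousWithinAt hτ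
  obtain ⟨η, hη, hgood⟩ := Metric.mem_nhdsWithin_iff.1
    (hK.and ((hnear hψ hψU rfl).and (hnear hα hαU h.symm)))
  have hI' : (ball τ η ∩ I).OrdConnected := by
    rw [Real.ball_eq_Ioo]
    exact ordConnected_Ioo.inter hI
  filter_upwards [inter_comm I _ ▸ inter_mem_nhdsWithin I (ball_mem_nhds τ hη)] with t ht
  have := dist_le_gronwallBound_of_isIntegralCurveOn hI' (fun s hs ↦ (hgood hs).1)
    (hψ.mono inter_subset_right) (hα.mono inter_subset_right) (fun s hs ↦ (hgood hs).2.1)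
    (fun s hs ↦ (hgood hs).2.2) (fun s _ ↦ (dist_self _).le) ⟨mem_ball_self hη, hτ⟩
    (dist_le_zero.2 h) ht
  rwa [gronwallBound_ε0_δ0, dist_le_zero] at this

theorem eqOn_of_isIntegralCurveOn (hI : I.OrdConnected)
    (hv : LocallyLipschitzInState v I U)
    (hψ : IsIntegralCurveOn ψ v I) (hα : IsIntegralCurveOn α v I)
    (hψU : MapsTo ψ I U) (hαU : MapsTo α I U) (hτ : τ ∈ I) (h : ψ τ = α τ) :
    EqOn ψ α I := by
  intro t ht
  refine (hI.isPreconnected.induction₂ (fun s u ↦ (ψ s = α s ↔ ψ u = α u)) ?_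
    (fun _ _ _ _ _ _ ↦ Iff.trans) (fun _ _ _ _ ↦ Iff.symm) hτ ht).1 h
  intro s hs
  by_cases hs' : ψ s = α s
  · filter_upwards [eventually_eq_of_isIntegralCurveOn hI hv hψ hα hψU hαU hs hs'] with u hu
    exact iff_of_true hs' hu
  · have hdiff := (hψ.continuousWithinAt hs).sub (hα.continuousWithinAt hs)
    filter_upwards [hdiff.tendsto.eventually_ne (sub_ne_zero.2 hs')] with u hu
    exact iff_of_false hs' (sub_ne_zero.1 hu)

end Uniqueness

/-- `IsPicardLindelof.exists_eq_forall_mem_Icc_hasDerivWithinAt`, remembering that the solution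
stays in the closed ball on which the hypotheses hold. -/
theorem IsPicardLindelof.exists_eq_isIntegralCurveOn_mapsTo [CompleteSpace E] {f : ℝ → E → E}
    {tmin tmax : ℝ} {t₀ : Icc tmin tmax} {x₀ x : E} {a r L K : ℝ≥0}
    (hf : IsPicardLindelof f t₀ x₀ a r L K) (hx : x ∈ closedBall x₀ r) :
    ∃ α : ℝ → E, α t₀ = x ∧ IsIntegralCurveOn α f (Icc tmin tmax) ∧
      MapsTo α (Icc tmin tmax) (closedBall x₀ a) := by
  obtain ⟨α, hα⟩ := ODE.FunSpace.exists_isFixedPt_next hf hx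
  refine ⟨α.compProj, by rw [ODE.FunSpace.compProj_val, ← hα, ODE.FunSpace.next_apply₀],
    fun t ht ↦ ?_, fun t _ ↦ α.compProj_mem_closedBall hf.mul_max_le⟩
  apply ODE.hasDerivWithinAt_picard_Icc t₀.2 hf.continuousOn_uncurry
    α.continuous_compProj.continuousOn (fun _ _ ↦ α.compProj_mem_closedBall hf.mul_max_le)
    x ht |>.congr_of_mem _ ht
  intro t' ht'
  nth_rw 1 [← hα]
  rw [ODE.FunSpace.compProj_of_mem ht', ODE.FunSpace.next_apply]

section ContinuousDependence

variable {Z : Type*} [TopologicalSpace Z] {v : Z → ℝ → E → E} {S X : Set E} {Q : Set Z}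
  {K : ℝ≥0} {a b τ : ℝ} {sol : E → Z → ℝ → E}

theorem tendstoUniformlyOn_of_isIntegralCurveOn (hτ : τ ∈ Icc a b)
    (hv : ∀ p ∈ Q, ∀ t ∈ Icc a b, LipschitzOnWith K (v p t) S)
    (hcont : ContinuousOn (fun q : ℝ × E × Z ↦ v q.2.2 q.1 q.2.1) (Icc a b ×ˢ S ×ˢ Q))
    (hsol₀ : ∀ x ∈ X, ∀ p ∈ Q, sol x p τ = x)
    (hsol : ∀ x ∈ X, ∀ p ∈ Q, IsIntegralCurveOn (sol x p) (v p) (Icc a b))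
    (hsolS : ∀ x ∈ X, ∀ p ∈ Q, MapsTo (sol x p) (Icc a b) S)
    {x₁ : E} (hx₁ : x₁ ∈ X) {p₁ : Z} (hp₁ : p₁ ∈ Q) :
    TendstoUniformlyOn (fun q : E × Z ↦ sol q.1 q.2) (sol x₁ p₁) (𝓝[X ×ˢ Q] (x₁, p₁))
      (Icc a b) := by
  rw [Metric.tendstoUniformlyOn_iff]
  intro η hη
  obtain ⟨θ, hθ, hθη⟩ := exists_pos_gronwallBound_lt K (b - a) hη
  set β := sol x₁ p₁
  have hfield : ∀ᶠ p in 𝓝[Q] p₁, ∀ s ∈ Icc a b, dist (v p s (β s)) (v p₁ s (β s)) < θ := by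
    have hβcont : ContinuousOn (Function.uncurry fun p s ↦ v p s (β s)) (Q ×ˢ Icc a b) :=
      hcont.comp (continuousOn_snd.prodMk (((hsol x₁ hx₁ p₁ hp₁).continuousOn.comp
        continuousOn_snd fun q hq ↦ hq.2).prodMk continuousOn_fst))
        fun q hq ↦ ⟨hq.2, hsolS x₁ hx₁ p₁ hp₁ hq.2, hq.1⟩
    obtain ⟨V, hV, hVθ⟩ := isCompact_Icc.mem_uniformity_of_prod hβcont hp₁ (dist_mem_uniformity hθ)
    exact mem_of_superset hV hVθ
  have hx : Tendsto Prod.fst (𝓝[X ×ˢ Q] (x₁, p₁)) (𝓝 x₁) :=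
    continuous_fst.continuousWithinAt
  have hp : Tendsto Prod.snd (𝓝[X ×ˢ Q] (x₁, p₁)) (𝓝[Q] p₁) :=
    continuous_snd.continuousWithinAt.tendsto_nhdsWithin fun q hq ↦ hq.2
  filter_upwards [self_mem_nhdsWithin, hx (ball_mem_nhds x₁ hθ), hp hfield]
    with ⟨x, p⟩ ⟨hx, hp⟩ hxθ hpθ s hs
  calc dist (β s) (sol x p s) ≤ gronwallBound θ K θ |s - τ| :=
        dist_le_gronwallBound_of_isIntegralCurveOn ordConnected_Icc (hv p hp)
          (hsol x₁ hx₁ p₁ hp₁) (hsol x hx p hp) (hsolS x₁ hx₁ p₁ hp₁) (hsolS x hx p hp)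
          (fun s hs ↦ by rw [dist_comm]; exact (hpθ s hs).le) hτ
          (by rw [hsol₀ x₁ hx₁ p₁ hp₁, hsol₀ x hx p hp, dist_comm]; exact (mem_ball.1 hxθ).le) hs
    _ ≤ gronwallBound θ K θ (b - a) :=
        gronwallBound_mono hθ.le hθ.le K.2 (Real.dist_le_of_mem_Icc hs hτ)
    _ < η := hθη

theorem continuousOn_of_isIntegralCurveOn (hτ : τ ∈ Icc a b)
    (hv : ∀ p ∈ Q, ∀ t ∈ Icc a b, LipschitzOnWith K (v p t) S)
    (hcont : ContinuousOn (fun q : ℝ × E × Z ↦ v q.2.2 q.1 q.2.1) (Icc a b ×ˢ S ×ˢ Q))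
    (hsol₀ : ∀ x ∈ X, ∀ p ∈ Q, sol x p τ = x)
    (hsol : ∀ x ∈ X, ∀ p ∈ Q, IsIntegralCurveOn (sol x p) (v p) (Icc a b))
    (hsolS : ∀ x ∈ X, ∀ p ∈ Q, MapsTo (sol x p) (Icc a b) S) :
    ContinuousOn (fun q : ℝ × E × Z ↦ sol q.2.1 q.2.2 q.1) (Icc a b ×ˢ X ×ˢ Q) := by
  rintro ⟨t₁, x₁, p₁⟩ ⟨ht₁, hx₁, hp₁⟩
  have hunif := tendstoUniformlyOn_of_isIntegralCurveOn hτ hv hcont hsol₀ hsol hsolS hx₁ hp₁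
  have hdata : Tendsto Prod.snd (𝓝[Icc a b ×ˢ X ×ˢ Q] (t₁, x₁, p₁)) (𝓝[X ×ˢ Q] (x₁, p₁)) :=
    continuous_snd.continuousWithinAt.tendsto_nhdsWithin fun q hq ↦ hq.2
  rw [Metric.tendstoUniformlyOn_iff] at hunif
  refine TendstoUniformlyOn.tendsto_comp (F := fun q : ℝ × E × Z ↦ sol q.2.1 q.2.2)
    (Metric.tendstoUniformlyOn_iff.2 fun η hη ↦ hdata.eventually (hunif η hη))
    ((hsol x₁ hx₁ p₁ hp₁).continuousWithinAt ht₁)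
    (continuous_fst.continuousWithinAt.tendsto_nhdsWithin fun q hq ↦ hq.1)

end ContinuousDependence

end ODE

section Parametric

variable {E Z : Type*} [NormedAddCommGroup E] [NormedAddCommGroup Z]

def ParamLocallyLipschitzInState (f : ℝ × E × Z → E) (J : Set ℝ) (U : Set E) (P : Set Z) :
    Prop :=
  ∀ t ∈ J, ∀ x ∈ U, ∀ p ∈ P, ∃ ε > (0:ℝ), ∃ L : ℝ,
    ∀ t' ∈ J, ∀ p' ∈ P, ∀ x' ∈ U, ∀ y' ∈ U,
      |t' - t| < ε → ‖p' - p‖ < ε → ‖x' - x‖ < ε → ‖y' - x‖ < ε →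
        ‖f (t', x', p') - f (t', y', p')‖ ≤ L * ‖x' - y'‖

variable {J : Set ℝ} {U : Set E} {P : Set Z} {f : ℝ × E × Z → E}

theorem ParamLocallyLipschitzInState.locallyLipschitzInState
    (hfLip : ParamLocallyLipschitzInState f J U P)
    {p₀ : Z} (hp₀ : p₀ ∈ P) :
    LocallyLipschitzInState (fun t x ↦ f (t, x, p₀)) J U := by
  intro t ht x hx
  obtain ⟨ε, hε, L, hL⟩ := hfLip t ht x hx p₀ hp₀
  refine ⟨L.toNNReal, U ∩ ball x ε, inter_mem_nhdsWithin U (ball_mem_nhds x hε), ?_⟩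
  filter_upwards [self_mem_nhdsWithin, mem_nhdsWithin_of_mem_nhds (ball_mem_nhds t hε)]
    with s hsJ hst
  refine LipschitzOnWith.of_dist_le_mul fun y hy z hz ↦ ?_
  rw [dist_eq_norm, dist_eq_norm]
  refine (hL s hsJ p₀ hp₀ y hy.1 z hz.1 hst (by simpa using hε) (mem_ball_iff_norm.1 hy.2)
    (mem_ball_iff_norm.1 hz.2)).trans ?_
  gcongr
  exact Real.le_coe_toNNReal L

theorem exists_lipschitzOnWith_norm_le (hU : IsOpen U) (hP : IsOpen P)
    (hfc : ContinuousOn f (J ×ˢ U ×ˢ P))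
    (hfLip : ParamLocallyLipschitzInState f J U P)
    {t₀ : ℝ} {z₀ : E} {q₀ : Z} (ht₀ : t₀ ∈ J) (hz₀ : z₀ ∈ U) (hq₀ : q₀ ∈ P) :
    ∃ ρ : ℝ≥0, 0 < ρ ∧ closedBall z₀ ρ ⊆ U ∧ ball q₀ ρ ⊆ P ∧ ∃ C K : ℝ≥0,
      ∀ t ∈ J, |t - t₀| ≤ ρ → ∀ p ∈ ball q₀ ρ,
        LipschitzOnWith K (fun x ↦ f (t, x, p)) (closedBall z₀ ρ) ∧
          ∀ x ∈ closedBall z₀ ρ, ‖f (t, x, p)‖ ≤ C := by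
  obtain ⟨ε, hε, L, hL⟩ := hfLip t₀ ht₀ z₀ hz₀ q₀ hq₀
  obtain ⟨δ, hδ, hbdd⟩ := Metric.mem_nhdsWithin_iff.1 <|
    (hfc _ ⟨ht₀, hz₀, hq₀⟩).norm.eventually (gt_mem_nhds (lt_add_one ‖f (t₀, z₀, q₀)‖))
  obtain ⟨rU, hrU, hrUsub⟩ := Metric.isOpen_iff.1 hU z₀ hz₀
  obtain ⟨rP, hrP, hrPsub⟩ := Metric.isOpen_iff.1 hP q₀ hq₀
  have hsmall : ∀ᶠ ρ in 𝓝 (0 : ℝ), ρ < ε ∧ ρ < δ ∧ ρ < rU ∧ ρ < rP :=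
    (eventually_lt_nhds hε).and <| (eventually_lt_nhds hδ).and <|
      (eventually_lt_nhds hrU).and (eventually_lt_nhds hrP)
  obtain ⟨ρ, ⟨hρε, hρδ, hρU, hρP⟩, hρ⟩ :=
    ((hsmall.filter_mono nhdsWithin_le_nhds).and (self_mem_nhdsWithin (s := Ioi 0))).exists
  have hρU' : closedBall z₀ ρ ⊆ U := (closedBall_subset_ball hρU).trans hrUsub
  have hρP' : ball q₀ ρ ⊆ P := (ball_subset_ball hρP.le).trans hrPsub
  refine ⟨⟨ρ, le_of_lt hρ⟩, hρ, hρU', hρP', ‖f (t₀, z₀, q₀)‖₊ + 1, L.toNNReal,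
    fun t ht htt₀ p hp ↦ ⟨LipschitzOnWith.of_dist_le_mul fun x hx y hy ↦ ?_, fun x hx ↦ ?_⟩⟩
  · rw [dist_eq_norm, dist_eq_norm]
    refine (hL t ht p (hρP' hp) x (hρU' hx) y (hρU' hy) (htt₀.trans_lt hρε)
      ((mem_ball_iff_norm.1 hp).trans hρε) ((mem_closedBall_iff_norm.1 hx).trans_lt hρε)
      ((mem_closedBall_iff_norm.1 hy).trans_lt hρε)).trans ?_
    gcongr
    exact Real.le_coe_toNNReal L
  · have hnear : (t, x, p) ∈ ball (t₀, z₀, q₀) δ := by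
      rw [← ball_prod_same, ← ball_prod_same]
      exact ⟨htt₀.trans_lt hρδ, (mem_closedBall.1 hx).trans_lt hρδ, (mem_ball.1 hp).trans hρδ⟩
    have := hbdd ⟨hnear, ht, hρU' hx, hρP' hp⟩
    push_cast
    exact this.le

theorem exists_Icc_isPicardLindelof (hJ : J.OrdConnected) (hU : IsOpen U) (hP : IsOpen P)
    (hfc : ContinuousOn f (J ×ˢ U ×ˢ P))
    (hfLip : ParamLocallyLipschitzInState f J U P)
    {t₀ : ℝ} {z₀ : E} {q₀ : Z} (ht₀ : t₀ ∈ J) (hz₀ : z₀ ∈ U) (hq₀ : q₀ ∈ P) :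
    ∃ c d : ℝ, Icc c d ⊆ J ∧ Icc c d ∈ 𝓝[J] t₀ ∧
      ∃ ρ : ℝ≥0, 0 < ρ ∧ closedBall z₀ ρ ⊆ U ∧ ball q₀ ρ ⊆ P ∧ ∃ C K : ℝ≥0,
        ∀ p ∈ ball q₀ ρ, ∀ τ (hτ : τ ∈ Icc c d),
          IsPicardLindelof (fun t x ↦ f (t, x, p)) ⟨τ, hτ⟩ z₀ ρ (ρ / 2) C K := by
  obtain ⟨ρ, hρ, hρU, hρP, C, K, hbound⟩ :=
    exists_lipschitzOnWith_norm_le hU hP hfc hfLip ht₀ hz₀ hq₀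
  -- half-length of the time interval, so that `C * (d - c) ≤ ρ / 2`
  set h : ℝ := ρ / (4 * (C + 1)) with hdef
  have hh : 0 < h := by positivity
  have hhρ : h ≤ ρ := div_le_self hρ.le (by linarith [C.2])
  obtain ⟨c, d, hcd, hnhds⟩ :=
    hJ.exists_Icc_mem_nhdsWithin ht₀ (sub_lt_self t₀ hh) (lt_add_of_pos_right t₀ hh)
  have htime : ∀ t ∈ Icc c d, t ∈ J ∧ |t - t₀| ≤ ρ := fun t ht ↦
    ⟨(hcd ht).1, abs_sub_le_iff.2 ⟨by linarith [(hcd ht).2.2], by linarith [(hcd ht).2.1]⟩⟩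
  refine ⟨c, d, fun t ht ↦ (hcd ht).1, hnhds, ρ, hρ, hρU, hρP, C, K, fun p hp τ hτ ↦
    ⟨fun t ht ↦ (hbound t (htime t ht).1 (htime t ht).2 p hp).1, fun x hx ↦ ?_,
      fun t ht ↦ (hbound t (htime t ht).1 (htime t ht).2 p hp).2, ?_⟩⟩
  · exact hfc.comp (continuous_id.prodMk continuous_const).continuousOn
      fun t ht ↦ ⟨(htime t ht).1, hρU hx, hρP hp⟩
  · have hc := (hcd ⟨le_rfl, hτ.1.trans hτ.2⟩).2
    have hd := (hcd ⟨hτ.1.trans hτ.2, le_rfl⟩).2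
    calc (C : ℝ) * max (d - τ) (τ - c) ≤ C * (2 * h) := by
          gcongr
          exact max_le (by linarith [hc.1, hd.2, hτ.1]) (by linarith [hc.1, hd.2, hτ.2])
      _ = ρ / 2 * (C / (C + 1)) := by
          rw [hdef]
          field_simp
          ring
      _ ≤ ρ / 2 :=
          mul_le_of_le_one_right (by positivity) (div_le_one_of_le₀ (by linarith) (by positivity))
      _ = ρ - (ρ / 2 : ℝ≥0) := by push_cast; ring

end Parametric

theorem stmt10_general
    {E Z : Type*} [NormedAddCommGroup E] [NormedSpace ℝ E] [CompleteSpace E]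
    [NormedAddCommGroup Z]
    (J : Set ℝ) (hJint : J.OrdConnected)
    {U : Set E} {P : Set Z} (hU : IsOpen U) (hP : IsOpen P)
    (f : ℝ × E × Z → E)
    (hfc : ContinuousOn f (J ×ˢ U ×ˢ P))
    (hfLip : ∀ t ∈ J, ∀ x ∈ U, ∀ p ∈ P, ∃ ε > (0:ℝ), ∃ L : ℝ,
      ∀ t' ∈ J, ∀ p' ∈ P, ∀ x' ∈ U, ∀ y' ∈ U,
        |t' - t| < ε → ‖p' - p‖ < ε → ‖x' - x‖ < ε → ‖y' - x‖ < ε →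
          ‖f (t', x', p') - f (t', y', p')‖ ≤ L * ‖x' - y'‖) :
    ∀ t₀ ∈ J, ∀ z₀ ∈ U, ∀ q₀ ∈ P,
      ∃ J₀ : Set ℝ, J₀ ⊆ J ∧ Convex ℝ J₀ ∧ J₀ ∈ nhdsWithin t₀ J ∧
      ∃ U₀ : Set E, IsOpen U₀ ∧ z₀ ∈ U₀ ∧ U₀ ⊆ U ∧
      ∃ P₀ : Set Z, IsOpen P₀ ∧ q₀ ∈ P₀ ∧ P₀ ⊆ P ∧
      ∃ φ : ℝ → ℝ → E → Z → E,
        (∀ τ₀ ∈ J₀, ∀ x₀ ∈ U₀, ∀ p₀ ∈ P₀,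
          -- φ τ₀ · x₀ p₀ solves the IVP on J₀
          (φ τ₀ τ₀ x₀ p₀ = x₀ ∧
            ∀ t ∈ J₀, φ τ₀ t x₀ p₀ ∈ U ∧
              HasDerivWithinAt (fun s => φ τ₀ s x₀ p₀)
                (f (t, φ τ₀ t x₀ p₀, p₀)) J₀ t) ∧
          -- uniqueness of the solution
          (∀ ψ : ℝ → E, ψ τ₀ = x₀ →
            (∀ t ∈ J₀, ψ t ∈ U ∧
              HasDerivWithinAt ψ (f (t, ψ t, p₀)) J₀ t) →
            ∀ t ∈ J₀, ψ t = φ τ₀ t x₀ p₀)) ∧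
        -- continuous dependence for fixed τ₀
        (∀ τ₀ ∈ J₀, ContinuousOn
          (fun q : ℝ × E × Z => φ τ₀ q.1 q.2.1 q.2.2)
          (J₀ ×ˢ U₀ ×ˢ P₀)) := by
  intro t₀ ht₀ z₀ hz₀ q₀ hq₀
  obtain ⟨c, d, hJ₀, hnhds, ρ, hρ, hρU, hρP, C, K, hPL⟩ :=
    exists_Icc_isPicardLindelof hJint hU hP hfc hfLip ht₀ hz₀ hq₀
  have hex : ∀ τ ∈ Icc c d, ∀ x ∈ ball z₀ (ρ / 2 : ℝ≥0), ∀ p ∈ ball q₀ ρ, ∃ α : ℝ → E,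
      α τ = x ∧ IsIntegralCurveOn α (fun t y ↦ f (t, y, p)) (Icc c d) ∧
        MapsTo α (Icc c d) (closedBall z₀ ρ) := fun τ hτ x hx p hp ↦
    (hPL p hp τ hτ).exists_eq_isIntegralCurveOn_mapsTo (ball_subset_closedBall hx)
  choose! sol hsol₀ hsol hsolS using hex
  have hU₀ : ball z₀ (ρ / 2 : ℝ≥0) ⊆ U :=
    (ball_subset_closedBall.trans (closedBall_subset_closedBall (by simp))).trans hρU
  refine ⟨Icc c d, hJ₀, convex_Icc c d, hnhds, ball z₀ (ρ / 2 : ℝ≥0), isOpen_ball,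
    mem_ball_self (by positivity), hU₀, ball q₀ ρ, isOpen_ball, mem_ball_self hρ, hρP,
    fun τ t x p ↦ sol τ x p t, fun τ hτ x hx p hp ↦ ⟨⟨hsol₀ τ hτ x hx p hp, fun t ht ↦
      ⟨hρU (hsolS τ hτ x hx p hp ht), hsol τ hτ x hx p hp t ht⟩⟩, fun ψ hψ₀ hψ t ht ↦ ?_⟩,
    fun τ hτ ↦ ?_⟩
  · exact eqOn_of_isIntegralCurveOn ordConnected_Icc
      ((ParamLocallyLipschitzInState.locallyLipschitzInState hfLip (hρP hp)).mono hJ₀)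
      (fun s hs ↦ (hψ s hs).2) (hsol τ hτ x hx p hp) (fun s hs ↦ (hψ s hs).1)
      (fun s hs ↦ hρU (hsolS τ hτ x hx p hp hs)) hτ (hψ₀.trans (hsol₀ τ hτ x hx p hp).symm) ht
  · exact continuousOn_of_isIntegralCurveOn (v := fun p t y ↦ f (t, y, p)) hτ
      (fun p hp t ht ↦ (hPL p hp τ hτ).lipschitzOnWith t ht)
      (hfc.mono (prod_mono hJ₀ (prod_mono hρU hρP))) (hsol₀ τ hτ) (hsol τ hτ) (hsolS τ hτ)

/-- Parameter-dependent Picard–Lindelöf: for a continuous right-hand side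
`f : J × U × P → E` which is locally Lipschitz in the `U`-variable, uniformly
in the other variables near each point, there exist, around any
`(t₀,z₀,q₀)`, neighbourhoods `J₀, U₀, P₀` such that each initial value
problem `x' = f(t,x,p₀)`, `x(τ₀) = x₀` with data in `J₀ × U₀ × P₀` has a
unique solution on `J₀`, and for each fixed `τ₀` the solution depends
continuously on `(t, x₀, p₀)`. -/
theorem stmt10
    {E Z : Type*} [NormedAddCommGroup E] [NormedSpace ℝ E] [CompleteSpace E]
    [NormedAddCommGroup Z] [NormedSpace ℝ Z]
    (J : Set ℝ) (hJint : J.OrdConnected)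
    (hJnd : ∃ a ∈ J, ∃ b ∈ J, a ≠ b)
    {U : Set E} {P : Set Z} (hU : IsOpen U) (hP : IsOpen P)
    (f : ℝ × E × Z → E)
    (hfc : ContinuousOn f (J ×ˢ U ×ˢ P))
    (hfLip : ∀ t ∈ J, ∀ x ∈ U, ∀ p ∈ P, ∃ ε > (0:ℝ), ∃ L : ℝ,
      ∀ t' ∈ J, ∀ p' ∈ P, ∀ x' ∈ U, ∀ y' ∈ U,
        |t' - t| < ε → ‖p' - p‖ < ε → ‖x' - x‖ < ε → ‖y' - x‖ < ε →
          ‖f (t', x', p') - f (t', y', p')‖ ≤ L * ‖x' - y'‖) :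
    ∀ t₀ ∈ J, ∀ z₀ ∈ U, ∀ q₀ ∈ P,
      ∃ J₀ : Set ℝ, J₀ ⊆ J ∧ Convex ℝ J₀ ∧ J₀ ∈ nhdsWithin t₀ J ∧
      ∃ U₀ : Set E, IsOpen U₀ ∧ z₀ ∈ U₀ ∧ U₀ ⊆ U ∧
      ∃ P₀ : Set Z, IsOpen P₀ ∧ q₀ ∈ P₀ ∧ P₀ ⊆ P ∧
      ∃ φ : ℝ → ℝ → E → Z → E,
        (∀ τ₀ ∈ J₀, ∀ x₀ ∈ U₀, ∀ p₀ ∈ P₀,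
          -- φ τ₀ · x₀ p₀ solves the IVP on J₀
          (φ τ₀ τ₀ x₀ p₀ = x₀ ∧
            ∀ t ∈ J₀, φ τ₀ t x₀ p₀ ∈ U ∧
              HasDerivWithinAt (fun s => φ τ₀ s x₀ p₀)
                (f (t, φ τ₀ t x₀ p₀, p₀)) J₀ t) ∧
          -- uniqueness of the solution
          (∀ ψ : ℝ → E, ψ τ₀ = x₀ →
            (∀ t ∈ J₀, ψ t ∈ U ∧
              HasDerivWithinAt ψ (f (t, ψ t, p₀)) J₀ t) →
            ∀ t ∈ J₀, ψ t = φ τ₀ t x₀ p₀)) ∧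
        -- continuous dependence for fixed τ₀
        (∀ τ₀ ∈ J₀, ContinuousOn
          (fun q : ℝ × E × Z => φ τ₀ q.1 q.2.1 q.2.2)
          (J₀ ×ˢ U₀ ×ˢ P₀)) :=
  stmt10_general J hJint hU hP f hfc hfLip
end

section
/- Let E₁, E₂, F be Banach spaces, U ⊆ E₁ and V ⊆ E₂ open, and γ : U × V → F a continuous map such that for all x ∈ U, z ∈ E₁ the directional derivative D_{(z,0)} γ(x, y) exists at every (x,y) ∈ U × V and defines a continuous map d^{(1,0)}γ : U × V × E₁ → F. Then the map γ^∨ : U → C(V, F), x ↦ γ(x, ·), with C(V,F) carrying the compact-open topology, is continuously differentiable in the sense that for every x ∈ U and z ∈ E₁, the limit lim_{t→0} (γ^∨(x+tz) − γ^∨(x))/t exists in C(V, F) and equals d^{(1,0)}γ(x, ·, z), and the resulting map U × E₁ → C(V,F) is continuous. -/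
open scoped UniformConvergence
open Filter Set

/-- Auxiliary: a continuous family on `s ×ˢ k`, `k` compact, converges uniformly on `k`
to its value at `q ∈ s` as the parameter tends to `q` within `s`. -/
theorem aux_tendstoUniformlyOn {α β E : Type*} [TopologicalSpace α] [TopologicalSpace β]
    [UniformSpace E] {f : α → β → E} {s : Set α} {k : Set β} {q : α}
    (hk : IsCompact k) (hf : ContinuousOn (Function.uncurry f) (s ×ˢ k)) (hq : q ∈ s) :
    TendstoUniformlyOn f (f q) (nhdsWithin q s) k := by
  intro u hu
  rcases hk.mem_uniformity_of_prod hf hq (symmetrize_mem_uniformity hu) with ⟨v, hv, h⟩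
  filter_upwards [hv] with p hp x hx
  exact (h p hp x hx).2

/-- If `γ : U × V → F` is continuous and its partial directional derivatives
`d^{(1,0)}γ(x,y,z) = D_{(z,0)}γ(x,y)` exist and are jointly continuous, then
`γ^∨ : U → C(V,F)` is `C¹` for the compact-open topology: the difference
quotients converge (uniformly on compact subsets of `V`) to
`d^{(1,0)}γ(x,·,z)`, and the derivative depends continuously on `(x,z)`. -/
theorem stmt13
    {E₁ E₂ F : Type*} [NormedAddCommGroup E₁] [NormedSpace ℝ E₁]
    [NormedAddCommGroup E₂] [NormedSpace ℝ E₂]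
    [NormedAddCommGroup F] [NormedSpace ℝ F] [CompleteSpace F]
    {U : Set E₁} {V : Set E₂} (hU : IsOpen U) (hV : IsOpen V)
    (γ : E₁ × E₂ → F) (hγ : ContinuousOn γ (U ×ˢ V))
    (d : E₁ → E₂ → E₁ → F)
    (hd : ∀ x ∈ U, ∀ y ∈ V, ∀ z : E₁,
      HasDerivAt (fun t : ℝ => γ (x + t • z, y)) (d x y z) 0)
    (hdcont : ContinuousOn
      (fun q : (E₁ × E₂) × E₁ => d q.1.1 q.1.2 q.2)
      ((U ×ˢ V) ×ˢ Set.univ)) :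
    (∀ x ∈ U, ∀ z : E₁,
      Tendsto
        (fun t : ℝ => UniformOnFun.ofFun {K : Set V | IsCompact K}
          (fun y : V => t⁻¹ • (γ (x + t • z, (y : E₂)) - γ (x, (y : E₂)))))
        (nhdsWithin (0 : ℝ) {t : ℝ | t ≠ 0})
        (nhds (UniformOnFun.ofFun {K : Set V | IsCompact K}
          (fun y : V => d x (y : E₂) z)))) ∧
      ContinuousOn
        (fun q : E₁ × E₁ => UniformOnFun.ofFun {K : Set V | IsCompact K}
          (fun y : V => d q.1 (y : E₂) q.2))
        (U ×ˢ Set.univ) := by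
  -- a shifted version of the derivative hypothesis
  have hd' : ∀ x ∈ U, ∀ y ∈ V, ∀ z : E₁, ∀ s : ℝ, x + s • z ∈ U →
      HasDerivAt (fun t : ℝ => γ (x + t • z, y)) (d (x + s • z) y z) s := by
    intro x hx y hy z s hs
    have base := hd (x + s • z) hs y hy z
    have hh : HasDerivAt (fun t : ℝ => t - s) 1 s := (hasDerivAt_id s).sub_const s
    have hcomp := (base.scomp_of_eq (x := s) hh (by simp) :
      HasDerivAt (fun t : ℝ => γ (x + s • z + (t - s) • z, y))
        ((1 : ℝ) • d (x + s • z) y z) s)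
    simp only [one_smul] at hcomp
    have heq : (fun t : ℝ => γ (x + t • z, y))
        = ((fun t : ℝ => γ (x + s • z + t • z, y)) ∘ fun t : ℝ => t - s) := by
      funext t
      have : x + t • z = x + s • z + (t - s) • z := by rw [sub_smul]; abel
      simp only [Function.comp_apply, this]
    rw [heq]
    exact hcomp
  constructor
  · intro x hx z
    rw [UniformOnFun.tendsto_iff_tendstoUniformlyOn]
    intro K hK
    -- the parameter set where x + σ • z ∈ U
    set s : Set ℝ := {σ : ℝ | x + σ • z ∈ U} with hs_def
    have hs_open : IsOpen s := hU.preimage (by fun_prop)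
    have h0s : (0 : ℝ) ∈ s := by simp [hs_def, hx]
    have hs_nhds : s ∈ nhds (0 : ℝ) := hs_open.mem_nhds h0s
    -- uniform convergence of the derivative family over K
    have huc : TendstoUniformlyOn (fun σ : ℝ => fun y : V => d (x + σ • z) (y : E₂) z)
        (fun y : V => d x (y : E₂) z) (nhds (0 : ℝ)) K := by
      have hcont : ContinuousOn
          (Function.uncurry (fun σ : ℝ => fun y : V => d (x + σ • z) (y : E₂) z)) (s ×ˢ K) := by
        apply hdcont.comp (f := fun p : ℝ × V => ((x + p.1 • z, (p.2 : E₂)), z))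
        · exact (Continuous.continuousOn (by fun_prop))
        · rintro ⟨σ, y⟩ ⟨hσ, -⟩
          exact ⟨⟨hσ, y.2⟩, trivial⟩
      have := aux_tendstoUniformlyOn hK hcont h0s
      rw [nhdsWithin_eq_nhds.2 hs_nhds] at this
      simpa using this
    rw [Metric.tendstoUniformlyOn_iff] at huc ⊢
    intro ε hε
    have hε2 : (0:ℝ) < ε / 2 := by linarith
    rcases Metric.eventually_nhds_iff.1 (huc (ε/2) hε2) with ⟨δ₁, hδ₁, H₁⟩
    rcases Metric.mem_nhds_iff.1 hs_nhds with ⟨δ₂, hδ₂, H₂⟩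
    rw [eventually_nhdsWithin_iff]
    rw [Metric.eventually_nhds_iff]
    refine ⟨min δ₁ δ₂, lt_min hδ₁ hδ₂, ?_⟩
    intro t ht htne y hy
    have htabs : |t| < min δ₁ δ₂ := by simpa [Real.dist_eq] using ht
    -- every σ in uIcc 0 t is small
    have hsmall : ∀ σ ∈ Set.uIcc (0:ℝ) t, |σ| ≤ |t| := by
      intro σ hσ
      rcases le_total 0 t with h | h
      · rw [Set.uIcc_of_le h] at hσ
        rw [abs_of_nonneg hσ.1, abs_of_nonneg h]; exact hσ.2
      · rw [Set.uIcc_of_ge h] at hσ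
        rw [abs_of_nonpos hσ.2, abs_of_nonpos h]; linarith [hσ.1]
    have hmemU : ∀ σ ∈ Set.uIcc (0:ℝ) t, x + σ • z ∈ U := fun σ hσ =>
      H₂ (by simpa [Real.dist_eq] using lt_of_le_of_lt (hsmall σ hσ) (lt_of_lt_of_le htabs (min_le_right _ _)))
    have hbound : ∀ σ ∈ Set.uIcc (0:ℝ) t, ‖d (x + σ • z) (y:E₂) z - d x (y:E₂) z‖ ≤ ε/2 := by
      intro σ hσ
      have := H₁ (y := σ) (by
        simpa [Real.dist_eq] using lt_of_le_of_lt (hsmall σ hσ) (lt_of_lt_of_le htabs (min_le_left _ _))) y hy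
      rw [dist_eq_norm, norm_sub_rev] at this
      linarith
    -- MVT for g σ = γ (x + σ • z, y) - σ • d x y z
    set g : ℝ → F := fun σ => γ (x + σ • z, (y:E₂)) - σ • d x (y:E₂) z with hg_def
    have hgderiv : ∀ σ ∈ Set.uIcc (0:ℝ) t,
        HasDerivWithinAt g (d (x + σ • z) (y:E₂) z - d x (y:E₂) z) (Set.uIcc (0:ℝ) t) σ := by
      intro σ hσ
      exact (((hd' x hx (y:E₂) y.2 z σ (hmemU σ hσ)).sub
        (((hasDerivAt_id σ).smul_const (d x (y:E₂) z)).congr_deriv (one_smul _ _))).hasDerivWithinAt)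
    have hMVT := Convex.norm_image_sub_le_of_norm_hasDerivWithin_le hgderiv hbound
      (convex_uIcc 0 t) Set.left_mem_uIcc Set.right_mem_uIcc
    have hg0 : g 0 = γ (x, (y:E₂)) := by simp [hg_def]
    have h1 : ‖γ (x + t • z, (y:E₂)) - γ (x, (y:E₂)) - t • d x (y:E₂) z‖ ≤ ε/2 * |t| := by
      have : g t - g 0 = γ (x + t • z, (y:E₂)) - γ (x, (y:E₂)) - t • d x (y:E₂) z := by
        simp [hg_def]; abel
      rw [this] at hMVT
      simpa [Real.norm_eq_abs] using hMVT
    simp only [Function.comp_apply, UniformOnFun.toFun_ofFun]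
    rw [dist_eq_norm]
    have htpos : (0:ℝ) < |t| := abs_pos.2 htne
    have : d x (y:E₂) z - t⁻¹ • (γ (x + t • z, (y:E₂)) - γ (x, (y:E₂)))
        = (-t⁻¹) • (γ (x + t • z, (y:E₂)) - γ (x, (y:E₂)) - t • d x (y:E₂) z) := by
      match_scalars <;> (field_simp; try exact (div_self htne).symm)
    rw [this, norm_smul]
    have : ‖-t⁻¹‖ = |t|⁻¹ := by simp
    rw [this]
    calc |t|⁻¹ * ‖γ (x + t • z, (y:E₂)) - γ (x, (y:E₂)) - t • d x (y:E₂) z‖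
        ≤ |t|⁻¹ * (ε/2 * |t|) := by
          exact mul_le_mul_of_nonneg_left h1 (by positivity)
      _ = ε/2 := by field_simp
      _ < ε := by linarith
  · intro q hq
    have : Filter.Tendsto
        (fun q : E₁ × E₁ => UniformOnFun.ofFun {K : Set V | IsCompact K}
          (fun y : V => d q.1 (y : E₂) q.2))
        (nhdsWithin q (U ×ˢ Set.univ))
        (nhds (UniformOnFun.ofFun {K : Set V | IsCompact K}
          (fun y : V => d q.1 (y : E₂) q.2))) := by
      rw [UniformOnFun.tendsto_iff_tendstoUniformlyOn]
      intro K hK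
      apply aux_tendstoUniformlyOn (f := fun p : E₁ × E₁ => fun y : V => d p.1 (y:E₂) p.2) hK _ hq
      apply hdcont.comp (f := fun p : (E₁ × E₁) × V => ((p.1.1, (p.2 : E₂)), p.1.2))
      · exact Continuous.continuousOn (by fun_prop)
      · rintro ⟨⟨x, z⟩, y⟩ ⟨⟨hx, -⟩, -⟩
        exact ⟨⟨hx, y.2⟩, trivial⟩
    exact this
end
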